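/- arXiv:2103.04196 — 8 statements merged into one kernel-verified Lean document; each statement's English description precedes it below -/
import Mathlib

section
/- Let p, q ∈ ℂ[x] with deg p = m ≥ 1, deg q = n ≥ 1, and let k = deg gcd(p,q). Then for every integer j with 1 ≤ j ≤ min(m,n), the kernel of the j-th Sylvester map S_j(p,q) has dimension k − j + 1 if j ≤ k, and dimension 0 if j > k. In particular, the nullity of S₁(p,q) equals deg gcd(p,q). -/
open Polynomial

/-- The squared ℓ²-norm of the coefficient sequence of a polynomial. -/
noncomputable def pnormSq (p : ℂ[X]) : ℝ := ∑ i ∈ p.support, ‖p.coeff i‖ ^ 2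

/-- The ℓ²-norm of the coefficient sequence of a polynomial. -/
noncomputable def pnorm (p : ℂ[X]) : ℝ := Real.sqrt (pnormSq p)

/-- The ℓ²-norm of a pair of polynomials. -/
noncomputable def pairNorm (p q : ℂ[X]) : ℝ := Real.sqrt (pnormSq p + pnormSq q)

/-- The ℓ²-norm of a triple of polynomials. -/
noncomputable def tripleNorm (p q r : ℂ[X]) : ℝ :=
  Real.sqrt (pnormSq p + pnormSq q + pnormSq r)

/-- The degree of the greatest common divisor of two polynomials. -/
noncomputable def gcdDeg (p q : ℂ[X]) : ℕ := (EuclideanDomain.gcd p q).natDegree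

/-- The set 𝒞_{m,n} of pairs of polynomials of degrees exactly m and n. -/
def Cmn (m n : ℕ) : Set (ℂ[X] × ℂ[X]) :=
  {pq | pq.1.degree = (m : WithBot ℕ) ∧ pq.2.degree = (n : WithBot ℕ)}

/-- The GCD manifold 𝒫ᵏ_{m,n} : pairs in 𝒞_{m,n} whose GCD has degree k. -/
def Pmnk (m n k : ℕ) : Set (ℂ[X] × ℂ[X]) :=
  {pq | pq ∈ Cmn m n ∧ gcdDeg pq.1 pq.2 = k}

/-- The distance θ_k(p,q) from (p,q) to the GCD manifold 𝒫ᵏ_{m,n}. -/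
noncomputable def theta (m n k : ℕ) (p q : ℂ[X]) : ℝ :=
  sInf ((fun rs => pairNorm (p - rs.1) (q - rs.2)) '' Pmnk m n k)

/-- The bilinear Sylvester expression (w,v) ↦ p·w − q·v as a linear map. -/
noncomputable def sylMap (p q : ℂ[X]) : ℂ[X] × ℂ[X] →ₗ[ℂ] ℂ[X] :=
  (LinearMap.mulLeft ℂ p).comp (LinearMap.fst ℂ ℂ[X] ℂ[X]) -
    (LinearMap.mulLeft ℂ q).comp (LinearMap.snd ℂ ℂ[X] ℂ[X])

/-- The domain V_j = {(w,v) : deg w ≤ n−j, deg v ≤ m−j} of the j-th Sylvester map. -/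
noncomputable def Vspace (m n j : ℕ) : Submodule ℂ (ℂ[X] × ℂ[X]) :=
  (Polynomial.degreeLE ℂ ((n - j : ℕ) : WithBot ℕ)).prod
    (Polynomial.degreeLE ℂ ((m - j : ℕ) : WithBot ℕ))

lemma finrank_degreeLE_aux (d : ℕ) :
    Module.finrank ℂ ↥(degreeLE ℂ (d : WithBot ℕ)) = d + 1 := by
  rw [← Polynomial.degreeLT_succ_eq_degreeLE]
  rw [(Polynomial.degreeLTEquiv ℂ (d + 1)).finrank_eq]
  simp

/-- Nullities of the Sylvester maps detect the GCD degree. -/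
theorem sylvester_nullity (m n : ℕ) (hm : 1 ≤ m) (hn : 1 ≤ n)
    (p q : ℂ[X]) (hp : p.degree = (m : WithBot ℕ)) (hq : q.degree = (n : WithBot ℕ))
    (k : ℕ) (hk : gcdDeg p q = k) :
    (∀ j : ℕ, 1 ≤ j → j ≤ min m n →
      Module.finrank ℂ ↥(Vspace m n j ⊓ LinearMap.ker (sylMap p q)) =
        if j ≤ k then k - j + 1 else 0) ∧
    Module.finrank ℂ ↥(Vspace m n 1 ⊓ LinearMap.ker (sylMap p q)) = gcdDeg p q := by
  have hp0 : p ≠ 0 := fun h => by simp [h] at hp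
  have hq0 : q ≠ 0 := fun h => by simp [h] at hq
  set g := EuclideanDomain.gcd p q with hgdef
  have hg0 : g ≠ 0 := fun h => hp0 ((EuclideanDomain.gcd_eq_zero_iff).mp h).1
  set p' := p / g with hp'def
  set q' := q / g with hq'def
  have hpp : g * p' = p :=
    EuclideanDomain.mul_div_cancel' hg0 (EuclideanDomain.gcd_dvd_left p q)
  have hqq : g * q' = q :=
    EuclideanDomain.mul_div_cancel' hg0 (EuclideanDomain.gcd_dvd_right p q)
  have hp'0 : p' ≠ 0 := fun h => hp0 (by rw [← hpp, h, mul_zero])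
  have hq'0 : q' ≠ 0 := fun h => hq0 (by rw [← hqq, h, mul_zero])
  -- coprimality
  have cop : IsCoprime p' q' := by
    rw [← EuclideanDomain.gcd_isUnit_iff]
    have hd : g * EuclideanDomain.gcd p' q' ∣ g := by
      apply EuclideanDomain.dvd_gcd
      · rw [← hpp]; exact mul_dvd_mul_left g (EuclideanDomain.gcd_dvd_left p' q')
      · rw [← hqq]; exact mul_dvd_mul_left g (EuclideanDomain.gcd_dvd_right p' q')
    have : EuclideanDomain.gcd p' q' ∣ 1 := by
      rw [← mul_dvd_mul_iff_left hg0, mul_one]; exact hd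
    exact isUnit_of_dvd_one this
  -- degrees
  have hkg : g.natDegree = k := hk
  have hpm : p.natDegree = m := natDegree_eq_of_degree_eq_some hp
  have hqn : q.natDegree = n := natDegree_eq_of_degree_eq_some hq
  have hmul1 : g.natDegree + p'.natDegree = m := by
    rw [← natDegree_mul hg0 hp'0, hpp, hpm]
  have hmul2 : g.natDegree + q'.natDegree = n := by
    rw [← natDegree_mul hg0 hq'0, hqq, hqn]
  have hkm : k ≤ m := by omega
  have hkn : k ≤ n := by omega
  have hp'deg : p'.natDegree = m - k := by omega
  have hq'deg : q'.natDegree = n - k := by omega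
  -- kernel characterization
  have hker : ∀ w v : ℂ[X], (w, v) ∈ LinearMap.ker (sylMap p q) ↔ p' * w = q' * v := by
    intro w v
    simp only [sylMap, LinearMap.mem_ker, LinearMap.sub_apply, LinearMap.comp_apply,
      LinearMap.fst_apply, LinearMap.snd_apply, LinearMap.mulLeft_apply, sub_eq_zero]
    constructor
    · intro h
      apply mul_left_cancel₀ hg0
      rw [← mul_assoc, ← mul_assoc, hpp, hqq]; exact h
    · intro h
      rw [← hpp, ← hqq, mul_assoc, mul_assoc, h]
  set φ : ℂ[X] →ₗ[ℂ] ℂ[X] × ℂ[X] :=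
    (LinearMap.mulLeft ℂ q').prod (LinearMap.mulLeft ℂ p') with hφdef
  have hφ : ∀ h : ℂ[X], φ h = (q' * h, p' * h) := fun h => rfl
  have hinj : Function.Injective φ := by
    intro a b hab
    have h1 : q' * a = q' * b := congrArg Prod.fst hab
    exact mul_left_cancel₀ hq'0 h1
  -- Case j ≤ k
  have claimA : ∀ j : ℕ, 1 ≤ j → j ≤ k →
      Vspace m n j ⊓ LinearMap.ker (sylMap p q) =
        Submodule.map φ (degreeLE ℂ ((k - j : ℕ) : WithBot ℕ)) := by
    intro j hj1 hjk
    ext ⟨w, v⟩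
    simp only [Submodule.mem_inf, Vspace, Submodule.mem_prod, mem_degreeLE,
      Submodule.mem_map, hker]
    constructor
    · rintro ⟨⟨hw, hv⟩, heq⟩
      have hdvd : q' ∣ w := by
        apply (cop.symm).dvd_of_dvd_mul_left
        exact ⟨v, heq⟩
      obtain ⟨h, rfl⟩ := hdvd
      have hv' : v = p' * h := by
        apply mul_left_cancel₀ hq'0
        rw [← heq]; ring
      refine ⟨h, ?_, ?_⟩
      · rw [← natDegree_le_iff_degree_le]
        by_cases h0 : h = 0
        · simp [h0]
        · have : (q' * h).natDegree ≤ n - j := by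
            rw [natDegree_le_iff_degree_le]; exact hw
          rw [natDegree_mul hq'0 h0, hq'deg] at this
          omega
      · rw [hφ, hv']
    · rintro ⟨h, hh, hφh⟩
      rw [hφ] at hφh
      obtain ⟨rfl, rfl⟩ := Prod.mk.injEq .. ▸ hφh
      have hhd : h.natDegree ≤ k - j := by rw [natDegree_le_iff_degree_le]; exact hh
      refine ⟨⟨?_, ?_⟩, by ring⟩
      · rw [← natDegree_le_iff_degree_le]
        calc (q' * h).natDegree ≤ q'.natDegree + h.natDegree := natDegree_mul_le
          _ ≤ n - j := by omega
      · rw [← natDegree_le_iff_degree_le]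
        calc (p' * h).natDegree ≤ p'.natDegree + h.natDegree := natDegree_mul_le
          _ ≤ m - j := by omega
  -- Case j > k
  have claimB : ∀ j : ℕ, k < j → j ≤ n →
      Vspace m n j ⊓ LinearMap.ker (sylMap p q) = ⊥ := by
    intro j hjk hjn
    rw [eq_bot_iff]
    rintro ⟨w, v⟩ hx
    simp only [Submodule.mem_inf, Vspace, Submodule.mem_prod, mem_degreeLE, hker] at hx
    obtain ⟨⟨hw, hv⟩, heq⟩ := hx
    have hdvd : q' ∣ w := (cop.symm).dvd_of_dvd_mul_left ⟨v, heq⟩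
    obtain ⟨h, rfl⟩ := hdvd
    have hw0 : h = 0 := by
      by_contra h0
      have : (q' * h).natDegree ≤ n - j := by
        rw [natDegree_le_iff_degree_le]; exact hw
      rw [natDegree_mul hq'0 h0, hq'deg] at this
      omega
    subst hw0
    have hv0 : v = 0 := by
      have : q' * v = 0 := by rw [← heq]; ring
      exact (mul_eq_zero.mp this).resolve_left hq'0
    subst hv0
    simp [Prod.ext_iff]
  have main : ∀ j : ℕ, 1 ≤ j → j ≤ min m n →
      Module.finrank ℂ ↥(Vspace m n j ⊓ LinearMap.ker (sylMap p q)) =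
        if j ≤ k then k - j + 1 else 0 := by
    intro j hj1 hjmn
    by_cases hjk : j ≤ k
    · rw [if_pos hjk, claimA j hj1 hjk,
        ← (Submodule.equivMapOfInjective φ hinj _).finrank_eq,
        finrank_degreeLE_aux]
    · rw [if_neg hjk, claimB j (by omega) (by omega)]
      exact finrank_bot ℂ _
  refine ⟨main, ?_⟩
  have h1 := main 1 le_rfl (by omega)
  rw [hk]
  by_cases hk1 : 1 ≤ k
  · rw [h1, if_pos hk1]; omega
  · rw [h1, if_neg hk1]; omega
end

section
/- Let p, q ∈ ℂ[x] with deg p = m ≥ 1, deg q = n ≥ 1, and suppose k = deg gcd(p,q) ≥ 1. Let u be a greatest common divisor of p and q, and set v = p/u and w = q/u. Then the kernel of the k-th Sylvester map S_k(p,q) is one-dimensional and is spanned by the pair (w, v). -/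
open Polynomial

/-- The kernel of the k-th Sylvester map is one-dimensional, spanned by the cofactor pair. -/
theorem sylvester_kernel_span (m n : ℕ) (hm : 1 ≤ m) (hn : 1 ≤ n)
    (p q : ℂ[X]) (hp : p.degree = (m : WithBot ℕ)) (hq : q.degree = (n : WithBot ℕ))
    (k : ℕ) (hk1 : 1 ≤ k) (hk : gcdDeg p q = k)
    (u v w : ℂ[X]) (hup : u ∣ p) (huq : u ∣ q)
    (hugr : ∀ d : ℂ[X], d ∣ p → d ∣ q → d ∣ u)
    (hv : p = u * v) (hw : q = u * w) :
    Module.finrank ℂ ↥(Vspace m n k ⊓ LinearMap.ker (sylMap p q)) = 1 ∧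
    Vspace m n k ⊓ LinearMap.ker (sylMap p q) =
      Submodule.span ℂ {((w, v) : ℂ[X] × ℂ[X])} := by
  classical
  have hp0 : p ≠ 0 := fun h => by simp [h] at hp
  have hq0 : q ≠ 0 := fun h => by simp [h] at hq
  have hu0 : u ≠ 0 := fun h => hp0 (by simp [hv, h])
  have hv0 : v ≠ 0 := fun h => hp0 (by simp [hv, h])
  have hw0 : w ≠ 0 := fun h => hq0 (by simp [hw, h])
  -- natDegrees
  have hpm : p.natDegree = m := natDegree_eq_of_degree_eq_some hp
  have hqn : q.natDegree = n := natDegree_eq_of_degree_eq_some hq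
  -- u has degree k
  have hgcd0 : EuclideanDomain.gcd p q ≠ 0 := by
    intro h
    rw [EuclideanDomain.gcd_eq_zero_iff] at h
    exact hp0 h.1
  have huk : u.natDegree = k := by
    have h1 : EuclideanDomain.gcd p q ∣ u :=
      hugr _ (EuclideanDomain.gcd_dvd_left p q) (EuclideanDomain.gcd_dvd_right p q)
    have h2 : u ∣ EuclideanDomain.gcd p q := EuclideanDomain.dvd_gcd hup huq
    have := Polynomial.natDegree_le_of_dvd h1 hu0
    have := Polynomial.natDegree_le_of_dvd h2 hgcd0
    simp only [gcdDeg] at hk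
    omega
  have hvdeg : v.natDegree = m - k := by
    have := natDegree_mul hu0 hv0
    rw [← hv, hpm, huk] at this
    omega
  have hwdeg : w.natDegree = n - k := by
    have := natDegree_mul hu0 hw0
    rw [← hw, hqn, huk] at this
    omega
  -- coprimality
  have hcop : IsCoprime v w := by
    rw [← EuclideanDomain.gcd_isUnit_iff]
    have hd1 : u * EuclideanDomain.gcd v w ∣ p := by
      rw [hv]; exact mul_dvd_mul_left u (EuclideanDomain.gcd_dvd_left v w)
    have hd2 : u * EuclideanDomain.gcd v w ∣ q := by
      rw [hw]; exact mul_dvd_mul_left u (EuclideanDomain.gcd_dvd_right v w)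
    have := hugr _ hd1 hd2
    rw [show u = u * 1 by ring] at this
    have : u * EuclideanDomain.gcd v w ∣ u * 1 := by simpa using this
    exact isUnit_of_dvd_one ((mul_dvd_mul_iff_left hu0).mp this)
  have hset : Vspace m n k ⊓ LinearMap.ker (sylMap p q) =
      Submodule.span ℂ {((w, v) : ℂ[X] × ℂ[X])} := by
    apply le_antisymm
    · rintro ⟨a, b⟩ ⟨hmem, hker⟩
      rw [Submodule.mem_span_singleton]
      have hab : p * a - q * b = 0 := by
        simpa [sylMap] using hker
      have hva : v * a = w * b := by
        have : u * (v * a) = u * (w * b) := by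
          rw [sub_eq_zero] at hab
          rw [hv, hw] at hab; ring_nf at hab ⊢; linear_combination hab
        exact mul_left_cancel₀ hu0 this
      have hwa : w ∣ a := (hcop.symm).dvd_of_dvd_mul_left ⟨b, hva⟩
      obtain ⟨c, hc⟩ := hwa
      have hbc : b = v * c := by
        apply mul_left_cancel₀ hw0
        rw [← hva, hc]; ring
      -- degree of c at most 0
      have hadeg : a.degree ≤ ((n - k : ℕ) : WithBot ℕ) := by
        have := hmem.1
        rwa [SetLike.mem_coe, Polynomial.mem_degreeLE] at this
      rcases eq_or_ne c 0 with rfl | hc0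
      · exact ⟨0, by simp [hc, hbc, Prod.ext_iff]⟩
      · have ha0 : a ≠ 0 := by rw [hc]; exact mul_ne_zero hw0 hc0
        have hna : a.natDegree ≤ n - k := natDegree_le_iff_degree_le.mpr hadeg
        have : a.natDegree = w.natDegree + c.natDegree := by
          rw [hc, natDegree_mul hw0 hc0]
        have hcd : c.natDegree = 0 := by omega
        obtain ⟨s, rfl⟩ := Polynomial.natDegree_eq_zero.mp hcd
        exact ⟨s, by simp [hc, hbc, Prod.ext_iff, Polynomial.smul_eq_C_mul]; constructor <;> ring⟩
    · rw [Submodule.span_le, Set.singleton_subset_iff]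
      refine ⟨⟨?_, ?_⟩, ?_⟩
      · rw [SetLike.mem_coe, Polynomial.mem_degreeLE]
        exact le_trans (degree_le_natDegree) (by simp [hwdeg])
      · rw [SetLike.mem_coe, Polynomial.mem_degreeLE]
        exact le_trans (degree_le_natDegree) (by simp [hvdeg])
      · simp only [SetLike.mem_coe, LinearMap.mem_ker, sylMap]
        simp [hv, hw]; ring
  refine ⟨?_, hset⟩
  rw [hset]
  rw [finrank_span_singleton (by simp [Prod.ext_iff, hw0])]
end

section
/- Let p, q ∈ ℂ[x] with deg p = m ≥ 1, deg q = n ≥ 1, gcd degree k = deg gcd(p,q) ≥ 1, a greatest common divisor u of p and q with cofactors v = p/u and w = q/u, and let j be an integer with 1 ≤ j ≤ k. Then the k − j + 1 pairs (xⁱ·w, xⁱ·v) for i = 0, 1, …, k − j form a basis of the kernel of the j-th Sylvester map S_j(p,q). -/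
open Polynomial

/-- The pairs (xⁱ·w, xⁱ·v), i = 0,…,k−j, form a basis of the kernel of the j-th
Sylvester map. -/
theorem sylvester_kernel_basis (m n : ℕ) (hm : 1 ≤ m) (hn : 1 ≤ n)
    (p q : ℂ[X]) (hp : p.degree = (m : WithBot ℕ)) (hq : q.degree = (n : WithBot ℕ))
    (k : ℕ) (hk1 : 1 ≤ k) (hk : gcdDeg p q = k)
    (u v w : ℂ[X]) (hup : u ∣ p) (huq : u ∣ q)
    (hugr : ∀ d : ℂ[X], d ∣ p → d ∣ q → d ∣ u)
    (hv : p = u * v) (hw : q = u * w)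
    (j : ℕ) (hj1 : 1 ≤ j) (hjk : j ≤ k) :
    LinearIndependent ℂ
      (fun i : Fin (k - j + 1) => ((X ^ (i : ℕ) * w, X ^ (i : ℕ) * v) : ℂ[X] × ℂ[X])) ∧
    Submodule.span ℂ
        (Set.range fun i : Fin (k - j + 1) =>
          ((X ^ (i : ℕ) * w, X ^ (i : ℕ) * v) : ℂ[X] × ℂ[X])) =
      Vspace m n j ⊓ LinearMap.ker (sylMap p q) := by
  classical
  -- basic nonvanishing
  have hp0 : p ≠ 0 := fun h => by simp [h] at hp
  have hq0 : q ≠ 0 := fun h => by simp [h] at hq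
  have hu0 : u ≠ 0 := fun h => hp0 (by simp [hv, h])
  have hv0 : v ≠ 0 := fun h => hp0 (by simp [hv, h])
  have hw0 : w ≠ 0 := fun h => hq0 (by simp [hw, h])
  have np : p.natDegree = m := natDegree_eq_of_degree_eq_some hp
  have nq : q.natDegree = n := natDegree_eq_of_degree_eq_some hq
  -- u has degree k
  have nu : u.natDegree = k := by
    set g := EuclideanDomain.gcd p q with hg
    have hgp : g ∣ p := EuclideanDomain.gcd_dvd_left p q
    have hgq : g ∣ q := EuclideanDomain.gcd_dvd_right p q
    have hgu : g ∣ u := hugr g hgp hgq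
    have hug : u ∣ g := EuclideanDomain.dvd_gcd hup huq
    have hg0 : g ≠ 0 := fun h => hu0 (by simpa [h] using hgu)
    have h1 := Polynomial.natDegree_le_of_dvd hgu hu0
    have h2 := Polynomial.natDegree_le_of_dvd hug hg0
    have : u.natDegree = g.natDegree := le_antisymm h2 h1
    rw [this]; exact hk
  have nv : k + v.natDegree = m := by
    have := Polynomial.natDegree_mul hu0 hv0
    rw [← hv, np, nu] at this; omega
  have nw : k + w.natDegree = n := by
    have := Polynomial.natDegree_mul hu0 hw0
    rw [← hw, nq, nu] at this; omega
  -- v and w are coprime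
  have hcop : IsCoprime w v := by
    rw [← EuclideanDomain.gcd_isUnit_iff]
    set d := EuclideanDomain.gcd w v with hd
    have hdw : d ∣ w := EuclideanDomain.gcd_dvd_left w v
    have hdv : d ∣ v := EuclideanDomain.gcd_dvd_right w v
    have h1 : u * d ∣ p := hv ▸ mul_dvd_mul_left u hdv
    have h2 : u * d ∣ q := hw ▸ mul_dvd_mul_left u hdw
    have : u * d ∣ u * 1 := by simpa using hugr _ h1 h2
    exact isUnit_of_dvd_one ((mul_dvd_mul_iff_left hu0).mp this)
  -- the multiplication map
  set L : ℂ[X] →ₗ[ℂ] ℂ[X] × ℂ[X] :=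
    (LinearMap.mulLeft ℂ w).prod (LinearMap.mulLeft ℂ v) with hL
  have hLapp : ∀ t : ℂ[X], L t = (w * t, v * t) := fun t => rfl
  have hLker : LinearMap.ker L = ⊥ := by
    rw [LinearMap.ker_eq_bot']
    intro t ht
    have : w * t = 0 := congrArg Prod.fst ht
    rcases mul_eq_zero.mp this with h | h
    · exact absurd h hw0
    · exact h
  have hfe : (fun i : Fin (k - j + 1) => ((X ^ (i : ℕ) * w, X ^ (i : ℕ) * v) : ℂ[X] × ℂ[X]))
      = L ∘ fun i : Fin (k - j + 1) => (X : ℂ[X]) ^ (i : ℕ) := by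
    funext i
    simp [hLapp, mul_comm]
  constructor
  · -- linear independence
    rw [hfe]
    refine LinearIndependent.map' ?_ L hLker
    rw [Fintype.linearIndependent_iff]
    intro g hg i
    have := congrArg (fun p => Polynomial.coeff p (i : ℕ)) hg
    simp only [finset_sum_coeff, coeff_smul, coeff_X_pow, smul_eq_mul, mul_ite, mul_one, mul_zero,
      Fin.val_inj, coeff_zero] at this
    rw [Finset.sum_ite_eq] at this; simpa using this
  · -- span equality
    have hrange : (Set.range fun i : Fin (k - j + 1) =>
        ((X ^ (i : ℕ) * w, X ^ (i : ℕ) * v) : ℂ[X] × ℂ[X]))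
        = L '' ↑((Finset.range (k - j + 1)).image fun i => (X : ℂ[X]) ^ i) := by
      ext z
      simp only [Set.mem_range, Finset.coe_image, Finset.coe_range, Set.mem_image, Set.mem_Iio]
      constructor
      · rintro ⟨i, rfl⟩
        exact ⟨X ^ (i : ℕ), ⟨(i : ℕ), i.isLt, rfl⟩, by simp [hLapp, mul_comm]⟩
      · rintro ⟨_, ⟨i, hi, rfl⟩, rfl⟩
        exact ⟨⟨i, hi⟩, by simp [hLapp, mul_comm]⟩
    rw [hrange, ← Submodule.map_span, ← Polynomial.degreeLE_eq_span_X_pow]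
    -- now show map L (degreeLE (k-j)) = Vspace ⊓ ker
    ext z
    obtain ⟨a, b⟩ := z
    simp only [Submodule.mem_map, Submodule.mem_inf, LinearMap.mem_ker, Vspace,
      Submodule.mem_prod, mem_degreeLE]
    constructor
    · rintro ⟨t, ht, hab⟩
      rw [hLapp] at hab
      injection hab with h1 h2
      subst h1; subst h2
      have hnt : t.natDegree ≤ k - j := natDegree_le_of_degree_le (by exact_mod_cast ht)
      refine ⟨⟨?_, ?_⟩, ?_⟩
      · rw [← natDegree_le_iff_degree_le]
        calc (w * t).natDegree ≤ w.natDegree + t.natDegree := natDegree_mul_le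
          _ ≤ n - j := by omega
      · rw [← natDegree_le_iff_degree_le]
        calc (v * t).natDegree ≤ v.natDegree + t.natDegree := natDegree_mul_le
          _ ≤ m - j := by omega
      · show p * (w * t) - q * (v * t) = 0
        rw [hv, hw]; ring
    · rintro ⟨⟨ha, hb⟩, hker⟩
      have heq : p * a = q * b := by
        have h : p * a - q * b = 0 := hker
        exact sub_eq_zero.mp h
      have heq2 : v * a = w * b := by
        apply mul_left_cancel₀ hu0
        rw [← mul_assoc, ← mul_assoc, ← hv, ← hw]; exact heq
      have hwa : w ∣ a := hcop.dvd_of_dvd_mul_left ⟨b, heq2⟩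
      obtain ⟨t, rfl⟩ := hwa
      have hb2 : b = v * t := by
        apply mul_left_cancel₀ hw0
        rw [← heq2]; ring
      subst hb2
      refine ⟨t, ?_, (hLapp t).trans ?_⟩
      · rw [← natDegree_le_iff_degree_le]
        by_cases ht0 : t = 0
        · simp [ht0]
        · have hmul := natDegree_mul hw0 ht0
          have haN : (w * t).natDegree ≤ n - j := natDegree_le_of_degree_le (by exact_mod_cast ha)
          omega
      · rfl
end

section
/- Let k, m, n be integers with 0 ≤ k ≤ min(m,n), and let u, v, w ∈ ℂ[x] with deg u = k, deg v = m − k, deg w = n − k. Let h : P_k → ℂ be a linear functional with h(u) ≠ 0. Define the linear map Φ : P_k × P_{m−k} × P_{n−k} → ℂ × P_m × P_n by Φ(a, b, c) = (h(a), v·a + u·b, w·a + u·c). Then Φ is injective if and only if there exists no non-constant polynomial dividing u, v and w simultaneously, i.e., every common divisor of u, v and w in ℂ[x] is a nonzero constant. -/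
open Polynomial

/-- The Jacobian map Φ(a,b,c) = (h(a), v·a + u·b, w·a + u·c) is injective iff
u, v, w have no non-constant common divisor. -/
theorem jacobian_injective_iff (k m n : ℕ) (hkm : k ≤ m) (hkn : k ≤ n)
    (u v w : ℂ[X]) (hu : u.degree = (k : WithBot ℕ))
    (hvdeg : v.degree = ((m - k : ℕ) : WithBot ℕ))
    (hwdeg : w.degree = ((n - k : ℕ) : WithBot ℕ))
    (h : ↥(Polynomial.degreeLE ℂ (k : WithBot ℕ)) →ₗ[ℂ] ℂ)
    (hhu : h ⟨u, Polynomial.mem_degreeLE.mpr hu.le⟩ ≠ 0) :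
    Function.Injective
      (fun abc : ↥(Polynomial.degreeLE ℂ (k : WithBot ℕ)) ×
          ↥(Polynomial.degreeLE ℂ ((m - k : ℕ) : WithBot ℕ)) ×
          ↥(Polynomial.degreeLE ℂ ((n - k : ℕ) : WithBot ℕ)) =>
        ((h abc.1, v * (abc.1 : ℂ[X]) + u * (abc.2.1 : ℂ[X]),
            w * (abc.1 : ℂ[X]) + u * (abc.2.2 : ℂ[X])) : ℂ × ℂ[X] × ℂ[X]))
      ↔ ∀ d : ℂ[X], d ∣ u → d ∣ v → d ∣ w → IsUnit d := by
  have hu0 : u ≠ 0 := fun h0 => by simp [h0] at hu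
  have hv0 : v ≠ 0 := fun h0 => by simp [h0] at hvdeg
  have hw0 : w ≠ 0 := fun h0 => by simp [h0] at hwdeg
  set U : ↥(Polynomial.degreeLE ℂ (k : WithBot ℕ)) :=
    ⟨u, Polynomial.mem_degreeLE.mpr hu.le⟩ with hU
  constructor
  · intro hinj d hdu hdv hdw
    by_contra hdunit
    obtain ⟨u', hu'⟩ := hdu
    obtain ⟨v', hv'⟩ := hdv
    obtain ⟨w', hw'⟩ := hdw
    have hu'mem : u' ∈ Polynomial.degreeLE ℂ (k : WithBot ℕ) := by
      rw [Polynomial.mem_degreeLE]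
      calc u'.degree ≤ u.degree :=
            Polynomial.degree_le_of_dvd ⟨d, by rw [hu', mul_comm]⟩ hu0
        _ = k := hu
    have hv'mem : v' ∈ Polynomial.degreeLE ℂ ((m - k : ℕ) : WithBot ℕ) := by
      rw [Polynomial.mem_degreeLE]
      calc v'.degree ≤ v.degree :=
            Polynomial.degree_le_of_dvd ⟨d, by rw [hv', mul_comm]⟩ hv0
        _ = ((m - k : ℕ) : WithBot ℕ) := hvdeg
    have hw'mem : w' ∈ Polynomial.degreeLE ℂ ((n - k : ℕ) : WithBot ℕ) := by
      rw [Polynomial.mem_degreeLE]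
      calc w'.degree ≤ w.degree :=
            Polynomial.degree_le_of_dvd ⟨d, by rw [hw', mul_comm]⟩ hw0
        _ = ((n - k : ℕ) : WithBot ℕ) := hwdeg
    set U' : ↥(Polynomial.degreeLE ℂ (k : WithBot ℕ)) := ⟨u', hu'mem⟩ with hU'
    set t : ℂ := h U' / h U with ht
    have key := hinj (a₁ := (U' - t • U, t • ⟨v, Polynomial.mem_degreeLE.mpr hvdeg.le⟩ -
        ⟨v', hv'mem⟩, t • ⟨w, Polynomial.mem_degreeLE.mpr hwdeg.le⟩ - ⟨w', hw'mem⟩))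
      (a₂ := 0) ?_
    · have ha : (U' : ℂ[X]) - t • u = 0 := by
        have := congrArg (fun x => ((x.1 : ℂ[X])) ) key
        simpa using this
      have : u' = Polynomial.C t * u := by
        rw [← Polynomial.smul_eq_C_mul]
        have := sub_eq_zero.mp ha
        simpa using this
      have : d * Polynomial.C t = 1 := by
        have h2 : u * (d * Polynomial.C t) = u * 1 := by
          rw [mul_one]; nth_rewrite 2 [hu']; rw [this]; ring
        exact mul_left_cancel₀ hu0 h2
      exact hdunit ⟨⟨d, Polynomial.C t, this, by rw [mul_comm]; exact this⟩, rfl⟩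
    · simp only [Prod.ext_iff]
      refine ⟨?_, ?_, ?_⟩
      · simp only [map_sub, map_smul, smul_eq_mul, ht]
        field_simp
        simp
      · show v * ((U' - t • U : _) : ℂ[X]) + u * _ = v * (0 : ℂ[X]) + u * (0 : ℂ[X])
        push_cast
        simp only [Polynomial.smul_eq_C_mul]
        rw [show (U : ℂ[X]) = u from rfl, show (U' : ℂ[X]) = u' from rfl, hu', hv']; ring
      · show w * ((U' - t • U : _) : ℂ[X]) + u * _ = w * (0 : ℂ[X]) + u * (0 : ℂ[X])
        push_cast
        simp only [Polynomial.smul_eq_C_mul]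
        rw [show (U : ℂ[X]) = u from rfl, show (U' : ℂ[X]) = u' from rfl, hu', hw']; ring
  · intro H x y hxy
    simp only [Prod.ext_iff] at hxy
    obtain ⟨h1, h2, h3⟩ := hxy
    -- coprimality
    have hcop : IsCoprime u (gcd v w) := by
      rw [← gcd_isUnit_iff]
      exact H _ (gcd_dvd_left _ _) ((gcd_dvd_right u _).trans (gcd_dvd_left v w))
        ((gcd_dvd_right u _).trans (gcd_dvd_right v w))
    set A : ℂ[X] := (x.1 : ℂ[X]) - (y.1 : ℂ[X]) with hA
    have hva : v * A = u * (-(x.2.1 : ℂ[X]) + (y.2.1 : ℂ[X])) := by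
      rw [hA]; ring_nf; linear_combination h2
    have hwa : w * A = u * (-(x.2.2 : ℂ[X]) + (y.2.2 : ℂ[X])) := by
      rw [hA]; ring_nf; linear_combination h3
    have hudA : u ∣ A := by
      have h4 : u ∣ gcd (v * A) (w * A) := dvd_gcd ⟨_, hva⟩ ⟨_, hwa⟩
      rw [gcd_mul_right] at h4
      have h5 : u ∣ gcd v w * A := by
        refine h4.trans ?_
        exact mul_dvd_mul_left _ (normalize_dvd_iff.mpr dvd_rfl)
      exact hcop.dvd_of_dvd_mul_left h5
    have hA0 : A = 0 := by
      obtain ⟨s, hs⟩ := hudA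
      by_cases hsz : s = 0
      · rw [hs, hsz, mul_zero]
      have hAdeg : A.degree ≤ (k : WithBot ℕ) := by
        rw [hA]
        exact le_trans (Polynomial.degree_sub_le _ _)
          (max_le (Polynomial.mem_degreeLE.mp x.1.2) (Polynomial.mem_degreeLE.mp y.1.2))
      have hsdeg : s.degree ≤ 0 := by
        rw [hs, Polynomial.degree_mul, hu] at hAdeg
        by_contra hc
        push_neg at hc
        have : (k : WithBot ℕ) + s.degree > (k : WithBot ℕ) + 0 := by
          exact_mod_cast WithBot.add_lt_add_left (x := (k : WithBot ℕ)) (by simp) hc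
        simp only [add_zero] at this
        exact absurd hAdeg (not_le.mpr this)
      have hsC : s = Polynomial.C (s.coeff 0) := Polynomial.eq_C_of_degree_le_zero hsdeg
      have hxy1 : (x.1 : ℂ[X]) - (y.1 : ℂ[X]) = (s.coeff 0) • u := by
        rw [← hA, hs, Polynomial.smul_eq_C_mul, ← hsC]; ring
      have hsub : x.1 - y.1 = (s.coeff 0) • U := by
        apply Subtype.ext
        push_cast
        exact hxy1
      have hcoeff : s.coeff 0 = 0 := by
        have := h1
        have h6 : h (x.1 - y.1) = 0 := by rw [map_sub, this, sub_self]
        rw [hsub, map_smul, smul_eq_mul] at h6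
        exact (mul_eq_zero.mp h6).resolve_right hhu
      rw [hs, hsC, hcoeff, Polynomial.C_0, mul_zero]
    have hxy1 : x.1 = y.1 := Subtype.ext (by rw [← sub_eq_zero]; exact hA0)
    have hxy2 : x.2.1 = y.2.1 := by
      apply Subtype.ext
      have : u * (x.2.1 : ℂ[X]) = u * (y.2.1 : ℂ[X]) := by
        have := h2; rw [hxy1] at this
        exact add_left_cancel this
      rw [← sub_eq_zero]
      have := mul_left_cancel₀ hu0 this
      rw [this, sub_self]
    have hxy3 : x.2.2 = y.2.2 := by
      apply Subtype.ext
      have : u * (x.2.2 : ℂ[X]) = u * (y.2.2 : ℂ[X]) := by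
        have := h3; rw [hxy1] at this
        exact add_left_cancel this
      rw [← sub_eq_zero]
      have := mul_left_cancel₀ hu0 this
      rw [this, sub_self]
    exact Prod.ext hxy1 (Prod.ext hxy2 hxy3)
end

section
/- Let p, q ∈ ℂ[x] with deg p = m ≥ 1, deg q = n ≥ 1, and gcd degree k = deg gcd(p,q). Let u be a greatest common divisor of p and q with cofactors v = p/u and w = q/u, and let h : P_k → ℂ be any linear functional with h(u) ≠ 0. Then the linear map Φ : P_k × P_{m−k} × P_{n−k} → ℂ × P_m × P_n defined by Φ(a, b, c) = (h(a), v·a + u·b, w·a + u·c) is injective. -/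
/-
If `(a, b, c)` and `(a', b', c')` have the same image, the difference `A = a - a'` satisfies
`u ∣ v * A` and `u ∣ w * A`. Since `u` is a greatest common divisor, the cofactors `v` and `w`
are coprime, so `u ∣ A`; as `deg A ≤ deg u`, this forces `A = r • u` for a scalar `r`, and
`h A = 0 ≠ h u` gives `r = 0`. Cancelling `u` then gives `b = b'` and `c = c'`.
-/

open Polynomial

theorem isRelPrime_of_forall_dvd_mul_of_dvd_mul {α : Type*} [CommMonoidWithZero α]
    [IsCancelMulZero α] {u v w : α} (hu : u ≠ 0) (hgcd : ∀ d, d ∣ u * v → d ∣ u * w → d ∣ u) : IsRelPrime v w := by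
  intro d hdv hdw
  obtain ⟨e, he⟩ := hgcd (u * d) (mul_dvd_mul_left u hdv) (mul_dvd_mul_left u hdw)
  exact isUnit_of_dvd_one ⟨e, mul_left_cancel₀ hu (by rw [mul_one, ← mul_assoc, ← he])⟩

theorem IsCoprime.dvd_of_dvd_mul_of_dvd_mul {R : Type*} [CommRing R] {u v w a : R}
    (hvw : IsCoprime v w) (hv : u ∣ v * a) (hw : u ∣ w * a) : u ∣ a := by
  obtain ⟨s, t, hst⟩ := hvw
  have ha : a = s * (v * a) + t * (w * a) := by linear_combination (-a) * hst
  rw [ha]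
  exact dvd_add (hv.mul_left s) (hw.mul_left t)

namespace Polynomial

variable {R : Type*} [CommRing R] [IsDomain R]

theorem exists_smul_eq_of_dvd_of_degree_le {u a : R[X]} (hdvd : u ∣ a)
    (hdeg : a.degree ≤ u.degree) : ∃ r : R, a = r • u := by
  obtain ⟨t, rfl⟩ := hdvd
  rcases eq_or_ne u 0 with rfl | hu
  · exact ⟨0, by simp⟩
  rcases eq_or_ne t 0 with rfl | ht
  · exact ⟨0, by simp⟩
  have hnat := natDegree_le_natDegree hdeg
  rw [natDegree_mul hu ht] at hnat
  refine ⟨t.coeff 0, ?_⟩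
  rw [eq_C_of_natDegree_eq_zero (by omega : t.natDegree = 0), smul_eq_C_mul, mul_comm]
  simp

theorem eq_of_dvd_sub_of_apply_eq {d : WithBot ℕ} (h : degreeLE R d →ₗ[R] R)
    {u x y : degreeLE R d} (hu : (u : R[X]).degree = d) (hhu : h u ≠ 0)
    (hdvd : (u : R[X]) ∣ x - y) (hxy : h x = h y) : x = y := by
  have hdeg : ((x : R[X]) - y).degree ≤ (u : R[X]).degree :=
    hu.symm ▸ mem_degreeLE.mp (sub_mem x.2 y.2)
  obtain ⟨r, hr⟩ := exists_smul_eq_of_dvd_of_degree_le hdvd hdeg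
  have hsub : x - y = r • u := Subtype.ext hr
  have hr0 : r * h u = 0 := by rw [← smul_eq_mul, ← map_smul, ← hsub, map_sub, hxy, sub_self]
  rw [← sub_eq_zero, hsub, (mul_eq_zero.mp hr0).resolve_right hhu, zero_smul]

end Polynomial

theorem jacobian_injective_at_gcd_general (m n : ℕ) (p q : ℂ[X]) (k : ℕ) (u v w : ℂ[X])
    (hugr : ∀ d : ℂ[X], d ∣ p → d ∣ q → d ∣ u)
    (hudeg : u.degree = (k : WithBot ℕ))
    (hv : p = u * v) (hw : q = u * w)
    (h : ↥(Polynomial.degreeLE ℂ (k : WithBot ℕ)) →ₗ[ℂ] ℂ)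
    (hhu : h ⟨u, Polynomial.mem_degreeLE.mpr hudeg.le⟩ ≠ 0) :
    Function.Injective
      (fun abc : ↥(Polynomial.degreeLE ℂ (k : WithBot ℕ)) ×
          ↥(Polynomial.degreeLE ℂ ((m - k : ℕ) : WithBot ℕ)) ×
          ↥(Polynomial.degreeLE ℂ ((n - k : ℕ) : WithBot ℕ)) =>
        ((h abc.1, v * (abc.1 : ℂ[X]) + u * (abc.2.1 : ℂ[X]),
            w * (abc.1 : ℂ[X]) + u * (abc.2.2 : ℂ[X])) : ℂ × ℂ[X] × ℂ[X])) := by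
  subst hv hw
  rintro ⟨a, b, c⟩ ⟨a', b', c'⟩ hxy
  simp only [Prod.mk.injEq] at hxy
  obtain ⟨ha, hb, hc⟩ := hxy
  have hu : u ≠ 0 := by rintro rfl; simp at hudeg
  have hvw : IsCoprime v w :=
    isRelPrime_iff_isCoprime.mp (isRelPrime_of_forall_dvd_mul_of_dvd_mul hu hugr)
  have hdvd : u ∣ (a : ℂ[X]) - a' :=
    hvw.dvd_of_dvd_mul_of_dvd_mul ⟨b' - b, by linear_combination hb⟩
      ⟨c' - c, by linear_combination hc⟩
  obtain rfl : a = a' := eq_of_dvd_sub_of_apply_eq h hudeg hhu hdvd ha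
  obtain rfl : b = b' := Subtype.ext (mul_left_cancel₀ hu (add_left_cancel hb))
  obtain rfl : c = c' := Subtype.ext (mul_left_cancel₀ hu (add_left_cancel hc))
  rfl

/-- At a GCD triplet the Jacobian map Φ(a,b,c) = (h(a), v·a + u·b, w·a + u·c)
is injective. -/
theorem jacobian_injective_at_gcd (m n : ℕ) (hm : 1 ≤ m) (hn : 1 ≤ n)
    (p q : ℂ[X]) (hp : p.degree = (m : WithBot ℕ)) (hq : q.degree = (n : WithBot ℕ))
    (k : ℕ) (hk : gcdDeg p q = k)
    (u v w : ℂ[X]) (hup : u ∣ p) (huq : u ∣ q)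
    (hugr : ∀ d : ℂ[X], d ∣ p → d ∣ q → d ∣ u)
    (hudeg : u.degree = (k : WithBot ℕ))
    (hv : p = u * v) (hw : q = u * w)
    (h : ↥(Polynomial.degreeLE ℂ (k : WithBot ℕ)) →ₗ[ℂ] ℂ)
    (hhu : h ⟨u, Polynomial.mem_degreeLE.mpr hudeg.le⟩ ≠ 0) :
    Function.Injective
      (fun abc : ↥(Polynomial.degreeLE ℂ (k : WithBot ℕ)) ×
          ↥(Polynomial.degreeLE ℂ ((m - k : ℕ) : WithBot ℕ)) ×
          ↥(Polynomial.degreeLE ℂ ((n - k : ℕ) : WithBot ℕ)) =>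
        ((h abc.1, v * (abc.1 : ℂ[X]) + u * (abc.2.1 : ℂ[X]),
            w * (abc.1 : ℂ[X]) + u * (abc.2.2 : ℂ[X])) : ℂ × ℂ[X] × ℂ[X])) :=
  jacobian_injective_at_gcd_general m n p q k u v w hugr hudeg hv hw h hhu
end

section
/- Let m, n ≥ 1 be integers and let j, k be integers with 0 ≤ j, k ≤ min(m,n). Then 𝒫ʲ_{m,n} is contained in the closure of 𝒫ᵏ_{m,n} (closure taken in the coefficient space ℂ^{m+1} × ℂ^{n+1}) if and only if j ≥ k. -/
open Polynomial

/-- The polynomial with coefficient vector c ∈ ℂ^d. -/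
noncomputable def ofCoeffs {d : ℕ} (c : Fin d → ℂ) : ℂ[X] :=
  ∑ i : Fin d, Polynomial.C (c i) * Polynomial.X ^ (i : ℕ)

/-- The GCD manifold 𝒫ᵏ_{m,n} realized in coefficient space ℂ^{m+1} × ℂ^{n+1}. -/
def PmnkC (m n k : ℕ) : Set ((Fin (m + 1) → ℂ) × (Fin (n + 1) → ℂ)) :=
  {cq | (ofCoeffs cq.1).degree = (m : WithBot ℕ) ∧
    (ofCoeffs cq.2).degree = (n : WithBot ℕ) ∧
    gcdDeg (ofCoeffs cq.1) (ofCoeffs cq.2) = k}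


section Aux
open Matrix
open scoped ComplexOrder

set_option linter.unusedVariables false

lemma ofCoeffs_coeff {d : ℕ} (c : Fin d → ℂ) (l : ℕ) :
    (ofCoeffs c).coeff l = if h : l < d then c ⟨l, h⟩ else 0 := by
  unfold ofCoeffs
  rw [finset_sum_coeff]
  simp only [coeff_C_mul, coeff_X_pow]
  split_ifs with h
  · rw [Finset.sum_eq_single (⟨l, h⟩ : Fin d)]
    · simp
    · intro b _ hb
      simp only [mul_ite, mul_one, mul_zero, ite_eq_right_iff]
      intro he; exact absurd (Fin.ext he.symm) hb
    · simp
  · apply Finset.sum_eq_zero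
    intro i _
    have : l ≠ (i : ℕ) := by omega
    simp [this]

lemma natDegree_ofCoeffs_le {d : ℕ} (c : Fin (d+1) → ℂ) : (ofCoeffs c).natDegree ≤ d := by
  apply natDegree_le_iff_coeff_eq_zero.2
  intro l hl
  rw [ofCoeffs_coeff]
  have : ¬ l < d + 1 := by omega
  simp [this]

lemma ofCoeffs_coeffs {d : ℕ} {p : ℂ[X]} (hp : p.natDegree ≤ d) :
    ofCoeffs (fun i : Fin (d+1) => p.coeff i) = p := by
  ext l
  rw [ofCoeffs_coeff]
  split_ifs with h
  · rfl
  · exact (coeff_eq_zero_of_natDegree_lt (by omega)).symm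

lemma coeff_mul_ofCoeffs (P : ℂ[X]) {d : ℕ} (w : Fin d → ℂ) (i : ℕ) :
    (P * ofCoeffs w).coeff i = ∑ a : Fin d, (P * X ^ (a : ℕ)).coeff i * w a := by
  unfold ofCoeffs
  rw [Finset.mul_sum, finset_sum_coeff]
  refine Finset.sum_congr rfl fun a _ => ?_
  rw [show P * (C (w a) * X ^ (a : ℕ)) = C (w a) * (P * X ^ (a : ℕ)) by ring,
    coeff_C_mul, mul_comm]

noncomputable def sylCM (m n k : ℕ) (x : (Fin (m+1) → ℂ) × (Fin (n+1) → ℂ)) :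
    Matrix (Fin (m + n - k + 1)) (Fin (n - k + 1) ⊕ Fin (m - k + 1)) ℂ :=
  fun i => Sum.elim (fun a => (ofCoeffs x.1 * X ^ (a : ℕ)).coeff i)
    (fun b => -((ofCoeffs x.2 * X ^ (b : ℕ)).coeff i))

lemma sylCM_mulVec (m n k : ℕ) (x : (Fin (m+1) → ℂ) × (Fin (n+1) → ℂ))
    (c : Fin (n - k + 1) ⊕ Fin (m - k + 1) → ℂ) (i : Fin (m + n - k + 1)) :
    (sylCM m n k x *ᵥ c) i =
      (ofCoeffs x.1 * ofCoeffs (c ∘ Sum.inl) - ofCoeffs x.2 * ofCoeffs (c ∘ Sum.inr)).coeff i := by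
  rw [coeff_sub, coeff_mul_ofCoeffs, coeff_mul_ofCoeffs]
  rw [Matrix.mulVec, dotProduct, Fintype.sum_sum_type]
  simp only [sylCM, Sum.elim_inl, Sum.elim_inr, Function.comp_apply, neg_mul]
  rw [Finset.sum_neg_distrib, sub_eq_add_neg]

lemma gcdDeg_eq (p q : ℂ[X]) : gcdDeg p q = (GCDMonoid.gcd p q).natDegree := by
  have h1 : Associated (EuclideanDomain.gcd p q) (GCDMonoid.gcd p q) := by
    apply associated_of_dvd_dvd
    · exact dvd_gcd (EuclideanDomain.gcd_dvd_left p q) (EuclideanDomain.gcd_dvd_right p q)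
    · exact EuclideanDomain.dvd_gcd (gcd_dvd_left p q) (gcd_dvd_right p q)
  exact natDegree_eq_of_degree_eq (degree_eq_degree_of_associated h1)

lemma gcd_decomp {p q : ℂ[X]} (hp : p ≠ 0) (hq : q ≠ 0) :
    ∃ g a b : ℂ[X], p = g * a ∧ q = g * b ∧ IsCoprime a b ∧ g.natDegree = gcdDeg p q := by
  refine ⟨GCDMonoid.gcd p q, p / GCDMonoid.gcd p q, q / GCDMonoid.gcd p q, ?_, ?_,
    isCoprime_div_gcd_div_gcd hq, (gcdDeg_eq p q).symm⟩
  · exact (EuclideanDomain.mul_div_cancel' (gcd_ne_zero_of_right hq) (gcd_dvd_left p q)).symm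
  · exact (EuclideanDomain.mul_div_cancel' (gcd_ne_zero_of_right hq) (gcd_dvd_right p q)).symm

lemma natDegree_eq_of_deg {P : ℂ[X]} {m : ℕ} (h : P.degree = (m : WithBot ℕ)) :
    P.natDegree = m := natDegree_eq_of_degree_eq_some h

lemma ne_zero_of_deg {P : ℂ[X]} {m : ℕ} (h : P.degree = (m : WithBot ℕ)) : P ≠ 0 := by
  intro h0; rw [h0, degree_zero] at h; exact (by simp at h)

lemma syl_not_inj {m n k : ℕ} {x : (Fin (m+1) → ℂ) × (Fin (n+1) → ℂ)}
    (hP : (ofCoeffs x.1).degree = (m : WithBot ℕ))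
    (hQ : (ofCoeffs x.2).degree = (n : WithBot ℕ))
    (hg : gcdDeg (ofCoeffs x.1) (ofCoeffs x.2) = k) :
    ∃ c, c ≠ 0 ∧ sylCM m n k x *ᵥ c = 0 := by
  set P := ofCoeffs x.1 with hPdef
  set Q := ofCoeffs x.2 with hQdef
  have hP0 : P ≠ 0 := ne_zero_of_deg hP
  have hQ0 : Q ≠ 0 := ne_zero_of_deg hQ
  obtain ⟨g, a, b, hpa, hqb, hab, hgdeg⟩ := gcd_decomp hP0 hQ0
  rw [hg] at hgdeg
  have hg0 : g ≠ 0 := fun h => hP0 (by rw [hpa, h, zero_mul])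
  have ha0 : a ≠ 0 := fun h => hP0 (by rw [hpa, h, mul_zero])
  have hb0 : b ≠ 0 := fun h => hQ0 (by rw [hqb, h, mul_zero])
  have hna : a.natDegree = m - k := by
    have := natDegree_eq_of_deg hP
    rw [hpa, natDegree_mul hg0 ha0, hgdeg] at this
    omega
  have hnb : b.natDegree = n - k := by
    have := natDegree_eq_of_deg hQ
    rw [hqb, natDegree_mul hg0 hb0, hgdeg] at this
    omega
  refine ⟨Sum.elim (fun i : Fin (n-k+1) => b.coeff i) (fun i : Fin (m-k+1) => a.coeff i),
    ?_, ?_⟩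
  · intro hc
    have := congrFun hc (Sum.inl ⟨b.natDegree, by omega⟩)
    simp only [Sum.elim_inl, Pi.zero_apply] at this
    exact leadingCoeff_ne_zero.2 hb0 this
  · funext i
    rw [sylCM_mulVec]
    have h1 : ofCoeffs ((Sum.elim (fun i : Fin (n-k+1) => b.coeff i)
        (fun i : Fin (m-k+1) => a.coeff i)) ∘ Sum.inl) = b := by
      rw [Sum.elim_comp_inl]; exact ofCoeffs_coeffs (by omega)
    have h2 : ofCoeffs ((Sum.elim (fun i : Fin (n-k+1) => b.coeff i)
        (fun i : Fin (m-k+1) => a.coeff i)) ∘ Sum.inr) = a := by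
      rw [Sum.elim_comp_inr]; exact ofCoeffs_coeffs (by omega)
    rw [h1, h2, ← hPdef, ← hQdef, hpa, hqb,
      show g * a * b - g * b * a = 0 by ring]
    simp

lemma syl_inj {m n k j : ℕ} {x : (Fin (m+1) → ℂ) × (Fin (n+1) → ℂ)}
    (hP : (ofCoeffs x.1).degree = (m : WithBot ℕ))
    (hQ : (ofCoeffs x.2).degree = (n : WithBot ℕ))
    (hg : gcdDeg (ofCoeffs x.1) (ofCoeffs x.2) = j)
    (hjk : j < k) (hkm : k ≤ m) (hkn : k ≤ n) :
    ∀ c, sylCM m n k x *ᵥ c = 0 → c = 0 := by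
  intro c hc
  set P := ofCoeffs x.1 with hPdef
  set Q := ofCoeffs x.2 with hQdef
  have hP0 : P ≠ 0 := ne_zero_of_deg hP
  have hQ0 : Q ≠ 0 := ne_zero_of_deg hQ
  set w := ofCoeffs (c ∘ Sum.inl) with hwdef
  set v := ofCoeffs (c ∘ Sum.inr) with hvdef
  have hnw : w.natDegree ≤ n - k := natDegree_ofCoeffs_le _
  have hnv : v.natDegree ≤ m - k := natDegree_ofCoeffs_le _
  have key : P * w - Q * v = 0 := by
    ext i
    rcases lt_or_ge i (m + n - k + 1) with hi | hi
    · have := congrFun hc ⟨i, hi⟩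
      rw [sylCM_mulVec] at this
      simpa using this
    · rw [coeff_zero]
      apply coeff_eq_zero_of_natDegree_lt
      calc (P * w - Q * v).natDegree
          ≤ max (P * w).natDegree (Q * v).natDegree := natDegree_sub_le _ _
        _ < i := by
            have h1 : (P * w).natDegree ≤ P.natDegree + w.natDegree := natDegree_mul_le
            have h2 : (Q * v).natDegree ≤ Q.natDegree + v.natDegree := natDegree_mul_le
            have hm' := natDegree_eq_of_deg hP
            have hn' := natDegree_eq_of_deg hQ
            simp only [max_lt_iff]
            omega
  have hPQ : P * w = Q * v := by linear_combination key
  obtain ⟨g, a, b, hpa, hqb, hab, hgdeg⟩ := gcd_decomp hP0 hQ0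
  rw [hg] at hgdeg
  have hg0 : g ≠ 0 := fun h => hP0 (by rw [hpa, h, zero_mul])
  have ha0 : a ≠ 0 := fun h => hP0 (by rw [hpa, h, mul_zero])
  have hb0 : b ≠ 0 := fun h => hQ0 (by rw [hqb, h, mul_zero])
  have hnb : b.natDegree = n - j := by
    have := natDegree_eq_of_deg hQ
    rw [hqb, natDegree_mul hg0 hb0, hgdeg] at this
    omega
  have haw : a * w = b * v := by
    have : g * (a * w) = g * (b * v) := by
      rw [← mul_assoc, ← mul_assoc, ← hpa, ← hqb]; exact hPQ
    exact mul_left_cancel₀ hg0 this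
  have hw0 : w = 0 := by
    by_contra hw
    have hdvd : b ∣ w := (hab.symm).dvd_of_dvd_mul_left ⟨v, haw⟩
    have := natDegree_le_of_dvd hdvd hw
    omega
  have hv0 : v = 0 := by
    rw [hw0, mul_zero] at hPQ
    rcases mul_eq_zero.1 hPQ.symm with h | h
    · exact absurd h hQ0
    · exact h
  funext s
  cases s with
  | inl a0 =>
    have h := ofCoeffs_coeff (c ∘ Sum.inl) (a0 : ℕ)
    rw [← hwdef, hw0, coeff_zero] at h
    rw [dif_pos a0.isLt] at h
    simpa using h.symm
  | inr b0 =>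
    have h := ofCoeffs_coeff (c ∘ Sum.inr) (b0 : ℕ)
    rw [← hvdef, hv0, coeff_zero] at h
    rw [dif_pos b0.isLt] at h
    simpa using h.symm

lemma continuous_coeff_ofCoeffs {d : ℕ} (l : ℕ) :
    Continuous fun c : Fin d → ℂ => (ofCoeffs c).coeff l := by
  simp only [ofCoeffs_coeff]
  by_cases h : l < d
  · simp only [dif_pos h]; exact continuous_apply _
  · simp only [dif_neg h]; exact continuous_const

lemma continuous_sylCM (m n k : ℕ) : Continuous (sylCM m n k) := by
  apply continuous_matrix
  intro i s
  cases s with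
  | inl a =>
    simp only [sylCM, Sum.elim_inl, coeff_mul_X_pow']
    by_cases h : (a : ℕ) ≤ (i : ℕ)
    · simp only [if_pos h]
      exact (continuous_coeff_ofCoeffs _).comp continuous_fst
    · simp only [if_neg h]; exact continuous_const
  | inr b =>
    simp only [sylCM, Sum.elim_inr, coeff_mul_X_pow']
    by_cases h : (b : ℕ) ≤ (i : ℕ)
    · simp only [if_pos h]
      exact ((continuous_coeff_ofCoeffs _).comp continuous_snd).neg
    · simp only [if_neg h]; exact continuous_const

noncomputable def detF (m n k : ℕ) (x : (Fin (m+1) → ℂ) × (Fin (n+1) → ℂ)) : ℂ :=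
  ((sylCM m n k x)ᴴ * sylCM m n k x).det

lemma continuous_detF (m n k : ℕ) : Continuous (detF m n k) :=
  (((continuous_sylCM m n k).matrix_conjTranspose).matrix_mul
    (continuous_sylCM m n k)).matrix_det

lemma detF_eq_zero_iff (m n k : ℕ) (x : (Fin (m+1) → ℂ) × (Fin (n+1) → ℂ)) :
    detF m n k x = 0 ↔ ∃ c, c ≠ 0 ∧ sylCM m n k x *ᵥ c = 0 := by
  rw [detF, ← Matrix.exists_mulVec_eq_zero_iff]
  constructor
  · rintro ⟨c, hc, h⟩
    exact ⟨c, hc, (Matrix.conjTranspose_mul_self_mulVec_eq_zero _ _).1 h⟩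
  · rintro ⟨c, hc, h⟩
    exact ⟨c, hc, (Matrix.conjTranspose_mul_self_mulVec_eq_zero _ _).2 h⟩

lemma gcdDeg_mul_left (d a b : ℂ[X]) (hd : d ≠ 0) (hab : ¬(a = 0 ∧ b = 0)) :
    gcdDeg (d * a) (d * b) = d.natDegree + gcdDeg a b := by
  rw [gcdDeg_eq, gcdDeg_eq, gcd_mul_left]
  have hg : GCDMonoid.gcd a b ≠ 0 := by
    intro h
    rcases (gcd_eq_zero_iff a b).1 h with ⟨h1, h2⟩
    exact hab ⟨h1, h2⟩
  rw [natDegree_mul (by simpa using normalize_eq_zero.not.2 hd) hg,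
    natDegree_eq_of_degree_eq (degree_normalize (p := d))]

lemma gcdDeg_of_coprime {a b : ℂ[X]} (h : IsCoprime a b) : gcdDeg a b = 0 := by
  rw [gcdDeg_eq]
  exact natDegree_eq_zero_of_isUnit ((gcd_isUnit_iff a b).2 h)

lemma coprime_of_no_common_root {A B : ℂ[X]}
    (h : ∀ z : ℂ, A.eval z = 0 → B.eval z ≠ 0) : IsCoprime A B := by
  by_contra hc
  have hgu : ¬ IsUnit (GCDMonoid.gcd A B) := fun hu => hc ((gcd_isUnit_iff A B).1 hu)
  have hdeg : (GCDMonoid.gcd A B).degree ≠ 0 := fun h0 =>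
    hgu (isUnit_iff_degree_eq_zero.2 h0)
  obtain ⟨z, hz⟩ := Complex.isAlgClosed.exists_root _ hdeg
  exact h z (hz.dvd (gcd_dvd_left A B)) (hz.dvd (gcd_dvd_right A B))

lemma exists_monic_factor {g : ℂ[X]} (hg : g ≠ 0) {k : ℕ} (hk : k ≤ g.natDegree) :
    ∃ g₁ : ℂ[X], g₁ ∣ g ∧ g₁.Monic ∧ g₁.natDegree = k := by
  have hsplit : g.roots.card = g.natDegree :=
    (splits_iff_card_roots).1 (IsAlgClosed.splits g)
  set t : Multiset ℂ := ((g.roots.toList.take k : List ℂ) : Multiset ℂ) with ht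
  have htle : t ≤ g.roots := by
    conv_rhs => rw [← Multiset.coe_toList g.roots]
    exact Multiset.coe_le.2 ((g.roots.toList.take_sublist k).subperm)
  have htcard : Multiset.card t = k := by
    rw [ht, Multiset.coe_card, List.length_take, Multiset.length_toList, hsplit]
    omega
  refine ⟨(t.map fun z => X - C z).prod, ?_, ?_, ?_⟩
  · exact (Multiset.prod_dvd_prod_of_le (Multiset.map_le_map htle)).trans
      (prod_multiset_X_sub_C_dvd g)
  · exact monic_multiset_prod_of_monic _ _ fun z _ => monic_X_sub_C z
  · rw [natDegree_multiset_prod_X_sub_C_eq_card, htcard]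

lemma ofCoeffs_add_smul {d : ℕ} (c e : Fin d → ℂ) (t : ℂ) :
    ofCoeffs (c + t • e) = ofCoeffs c + C t * ofCoeffs e := by
  unfold ofCoeffs
  rw [Finset.mul_sum, ← Finset.sum_add_distrib]
  refine Finset.sum_congr rfl fun i _ => ?_
  simp only [Pi.add_apply, Pi.smul_apply, smul_eq_mul, C_add, C_mul]
  ring

lemma degree_point (r : ℂ) (j m : ℕ) (hjm : j ≤ m) :
    (X ^ j * (X - C r) ^ (m - j) : ℂ[X]).degree = (m : WithBot ℕ) := by
  rw [degree_mul, degree_X_pow, degree_pow, degree_X_sub_C, nsmul_eq_mul, mul_one,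
    ← Nat.cast_add]
  norm_cast
  omega

lemma cop12 : IsCoprime (X - C (1:ℂ)) (X - C (2:ℂ)) := by
  refine ⟨1, -1, ?_⟩
  have h : (1:ℂ[X]) * (X - C 1) + (-1) * (X - C 2) = C 2 - C 1 := by ring
  rw [h, ← C_sub]
  norm_num

lemma exists_point (m n j : ℕ) (hjm : j ≤ m) (hjn : j ≤ n) :
    ∃ x : (Fin (m+1) → ℂ) × (Fin (n+1) → ℂ), x ∈ PmnkC m n j := by
  set p₀ : ℂ[X] := X ^ j * (X - C 1) ^ (m - j) with hp₀
  set q₀ : ℂ[X] := X ^ j * (X - C 2) ^ (n - j) with hq₀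
  have hpd : p₀.degree = (m : WithBot ℕ) := degree_point 1 j m hjm
  have hqd : q₀.degree = (n : WithBot ℕ) := degree_point 2 j n hjn
  have hofp : ofCoeffs (fun i : Fin (m+1) => p₀.coeff i) = p₀ :=
    ofCoeffs_coeffs (natDegree_eq_of_deg hpd).le
  have hofq : ofCoeffs (fun i : Fin (n+1) => q₀.coeff i) = q₀ :=
    ofCoeffs_coeffs (natDegree_eq_of_deg hqd).le
  refine ⟨(fun i => p₀.coeff i, fun i => q₀.coeff i), ?_, ?_, ?_⟩
  · rw [hofp]; exact hpd
  · rw [hofq]; exact hqd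
  · rw [hofp, hofq, hp₀, hq₀,
      gcdDeg_mul_left _ _ _ (pow_ne_zero j X_ne_zero)
        (fun h => pow_ne_zero (m-j) (X_sub_C_ne_zero 1) h.1),
      natDegree_X_pow, gcdDeg_of_coprime (cop12.pow), add_zero]

lemma mem_closure_step (m n j k : ℕ) (hkj : k < j) (hjm : j ≤ m) (hjn : j ≤ n)
    {x : (Fin (m+1) → ℂ) × (Fin (n+1) → ℂ)} (hx : x ∈ PmnkC m n j) :
    x ∈ closure (PmnkC m n k) := by
  obtain ⟨hPdeg, hQdeg, hgj⟩ := hx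
  have hP0 : ofCoeffs x.1 ≠ 0 := ne_zero_of_deg hPdeg
  have hQ0 : ofCoeffs x.2 ≠ 0 := ne_zero_of_deg hQdeg
  obtain ⟨g, a, b, hpa, hqb, hab, hgdeg⟩ := gcd_decomp hP0 hQ0
  rw [hgj] at hgdeg
  have hg0 : g ≠ 0 := fun h => hP0 (by rw [hpa, h, zero_mul])
  have ha0 : a ≠ 0 := fun h => hP0 (by rw [hpa, h, mul_zero])
  have hb0 : b ≠ 0 := fun h => hQ0 (by rw [hqb, h, mul_zero])
  obtain ⟨g₁, hg₁dvd, hg₁mon, hg₁deg⟩ := exists_monic_factor (k := k) hg0 (by omega)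
  obtain ⟨g₂, hgg⟩ := hg₁dvd
  have hg₁0 : g₁ ≠ 0 := hg₁mon.ne_zero
  have hg₂0 : g₂ ≠ 0 := by
    intro h; rw [h, mul_zero] at hgg; exact hg0 hgg
  set cg₁ : Fin (n+1) → ℂ := fun i => g₁.coeff i with hcg
  have hofs : ofCoeffs cg₁ = g₁ := ofCoeffs_coeffs (by omega)
  set T : Set ℂ := (fun z => -((g₂ * b).eval z)) '' {z | (g₂ * a).IsRoot z} with hT
  have hTfin : T.Finite := (finite_setOf_isRoot (mul_ne_zero hg₂0 ha0)).image _
  have key : ∀ t : ℂ, t ≠ 0 → t ∉ T → (x.1, x.2 + t • cg₁) ∈ PmnkC m n k := by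
    intro t ht0 htT
    have hQ' : ofCoeffs (x.2 + t • cg₁) = ofCoeffs x.2 + C t * g₁ := by
      rw [ofCoeffs_add_smul, hofs]
    have hfactor : ofCoeffs x.2 + C t * g₁ = g₁ * (g₂ * b + C t) := by
      rw [hqb, hgg]; ring
    have hdlt : (C t * g₁).degree < (ofCoeffs x.2).degree := by
      rw [hQdeg]
      apply lt_of_le_of_lt (degree_mul_le _ _)
      have h1 : (C t).degree + g₁.degree ≤ 0 + (k : WithBot ℕ) :=
        add_le_add degree_C_le (le_of_eq (by rw [degree_eq_natDegree hg₁0, hg₁deg]))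
      apply lt_of_le_of_lt h1
      rw [zero_add]
      exact_mod_cast (show k < n by omega)
    refine ⟨hPdeg, ?_, ?_⟩
    · rw [hQ', degree_add_eq_left_of_degree_lt hdlt, hQdeg]
    · rw [hQ', hfactor]
      have hP' : ofCoeffs x.1 = g₁ * (g₂ * a) := by rw [hpa, hgg]; ring
      rw [hP']
      have hcop : IsCoprime (g₂ * a) (g₂ * b + C t) := by
        apply coprime_of_no_common_root
        intro z hz hz2
        apply htT
        refine ⟨z, hz, ?_⟩
        have hev : (g₂ * b).eval z + t = 0 := by
          simpa [eval_add, eval_C] using hz2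
        linear_combination -hev
      rw [gcdDeg_mul_left _ _ _ hg₁0 (fun h => mul_ne_zero hg₂0 ha0 h.1),
        hg₁deg, gcdDeg_of_coprime hcop, add_zero]
  have hf0 : (fun t : ℂ => (x.1, x.2 + t • cg₁)) 0 = x := by simp
  have hcont : Continuous (fun t : ℂ => (x.1, x.2 + t • cg₁)) :=
    continuous_const.prodMk (continuous_const.add (continuous_id.smul continuous_const))
  have htend : Filter.Tendsto (fun t : ℂ => (x.1, x.2 + t • cg₁)) (nhdsWithin 0 {(0:ℂ)}ᶜ)
      (nhds x) := by
    have h := (hcont.tendsto 0).mono_left (nhdsWithin_le_nhds (s := {(0:ℂ)}ᶜ))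
    simpa using h
  apply mem_closure_of_tendsto htend
  have hTc : (T \ {0})ᶜ ∈ nhds (0:ℂ) := by
    apply IsOpen.mem_nhds (hTfin.subset Set.diff_subset).isClosed.isOpen_compl
    simp
  have h1 : ∀ᶠ t in nhdsWithin 0 {(0:ℂ)}ᶜ, t ∈ (T \ {0})ᶜ :=
    eventually_nhdsWithin_of_eventually_nhds hTc
  have h2 : ∀ᶠ t in nhdsWithin 0 {(0:ℂ)}ᶜ, t ≠ 0 := eventually_mem_nhdsWithin
  filter_upwards [h1, h2] with t ht1 ht2
  exact key t ht2 fun hT' => ht1 ⟨hT', ht2⟩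

end Aux

/-- 𝒫ʲ_{m,n} lies in the closure of 𝒫ᵏ_{m,n} iff j ≥ k. -/
theorem gcd_manifold_closure (m n : ℕ) (hm : 1 ≤ m) (hn : 1 ≤ n)
    (j k : ℕ) (hj : j ≤ min m n) (hk : k ≤ min m n) :
    PmnkC m n j ⊆ closure (PmnkC m n k) ↔ k ≤ j := by
  have hjm : j ≤ m := le_trans hj (min_le_left m n)
  have hjn : j ≤ n := le_trans hj (min_le_right m n)
  have hkm : k ≤ m := le_trans hk (min_le_left m n)
  have hkn : k ≤ n := le_trans hk (min_le_right m n)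
  constructor
  · intro hsub
    by_contra hlt
    push_neg at hlt
    obtain ⟨x₀, hx₀⟩ := exists_point m n j hjm hjn
    have hx₀c := hsub hx₀
    have hclosed : IsClosed (detF m n k ⁻¹' {0}) :=
      isClosed_singleton.preimage (continuous_detF m n k)
    have hsubZ : PmnkC m n k ⊆ detF m n k ⁻¹' {0} := by
      intro y hy
      obtain ⟨h1, h2, h3⟩ := hy
      exact (detF_eq_zero_iff m n k y).2 (syl_not_inj h1 h2 h3)
    have hx₀Z : x₀ ∈ detF m n k ⁻¹' {0} := closure_minimal hsubZ hclosed hx₀c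
    obtain ⟨c, hc0, hker⟩ := (detF_eq_zero_iff m n k x₀).1 hx₀Z
    obtain ⟨h1, h2, h3⟩ := hx₀
    exact hc0 (syl_inj h1 h2 h3 hlt hkm hkn c hker)
  · intro hkj x hx
    rcases eq_or_lt_of_le hkj with he | hlt
    · subst he
      exact subset_closure hx
    · exact mem_closure_step m n j k hlt hjm hjn hx
end

section
/- Let m, n ≥ 1, 0 ≤ k ≤ min(m,n), and let (p̂,q̂) ∈ 𝒫ᵏ_{m,n}. Then for every integer j with 0 ≤ j ≤ min(m,n), θ_j(p̂,q̂) = 0 if and only if j ≤ k; that is, the set { j : θ_j(p̂,q̂) = 0 } equals {0, 1, …, k}, and in particular θ_{k+1}(p̂,q̂) > 0 when k < min(m,n). -/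
open Polynomial

lemma pnormSq_nonneg (p : ℂ[X]) : 0 ≤ pnormSq p :=
  Finset.sum_nonneg fun _ _ => sq_nonneg _

lemma pnorm_nonneg (p : ℂ[X]) : 0 ≤ pnorm p := Real.sqrt_nonneg _

lemma pnormSq_eq_range {p : ℂ[X]} {N : ℕ} (h : p.natDegree < N) :
    pnormSq p = ∑ i ∈ Finset.range N, ‖p.coeff i‖ ^ 2 := by
  refine Finset.sum_subset (Polynomial.supp_subset_range h) ?_
  intro x _ hx
  simp [Polynomial.notMem_support_iff.mp hx]

lemma pnormSq_zero : pnormSq 0 = 0 := by simp [pnormSq]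

lemma sq_coeff_le_pnormSq (p : ℂ[X]) (i : ℕ) : ‖p.coeff i‖ ^ 2 ≤ pnormSq p := by
  by_cases h : i ∈ p.support
  · exact Finset.single_le_sum (fun k _ => sq_nonneg ‖p.coeff k‖) h
  · simp [Polynomial.notMem_support_iff.mp h, pnormSq_nonneg]

lemma norm_coeff_le_pnorm (p : ℂ[X]) (i : ℕ) : ‖p.coeff i‖ ≤ pnorm p := by
  have := sq_coeff_le_pnormSq p i
  have h2 : ‖p.coeff i‖ ≤ Real.sqrt (‖p.coeff i‖ ^ 2) := by
    rw [Real.sqrt_sq (norm_nonneg _)]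
  exact h2.trans (Real.sqrt_le_sqrt this)

lemma pnorm_le_pairNorm_left (p q : ℂ[X]) : pnorm p ≤ pairNorm p q :=
  Real.sqrt_le_sqrt (by linarith [pnormSq_nonneg q])

lemma pnorm_le_pairNorm_right (p q : ℂ[X]) : pnorm q ≤ pairNorm p q :=
  Real.sqrt_le_sqrt (by linarith [pnormSq_nonneg p])

lemma pairNorm_nonneg (p q : ℂ[X]) : 0 ≤ pairNorm p q := Real.sqrt_nonneg _

lemma pnormSq_C_mul (c : ℂ) (p : ℂ[X]) : pnormSq (C c * p) = ‖c‖ ^ 2 * pnormSq p := by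
  have h1 : (C c * p).natDegree < p.natDegree + 1 :=
    Nat.lt_succ_of_le ((Polynomial.natDegree_C_mul_le c p))
  rw [pnormSq_eq_range h1, pnormSq_eq_range (Nat.lt_succ_self _), Finset.mul_sum]
  refine Finset.sum_congr rfl fun i _ => ?_
  rw [Polynomial.coeff_C_mul, norm_mul, mul_pow]

lemma pairNorm_zero_C_mul (c : ℂ) (p : ℂ[X]) :
    pairNorm 0 (C c * p) = ‖c‖ * pnorm p := by
  rw [pairNorm, pnormSq_zero, zero_add, pnormSq_C_mul, Real.sqrt_mul (sq_nonneg _),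
    Real.sqrt_sq (norm_nonneg _), pnorm]

lemma gcdDeg_eq_of (g a b p q : ℂ[X]) (hg : g ≠ 0) (hp : p = g * a) (hq : q = g * b)
    (hab : IsCoprime a b) (hp0 : p ≠ 0) : gcdDeg p q = g.natDegree := by
  set d := EuclideanDomain.gcd p q with hd
  have hgd : g ∣ d := EuclideanDomain.dvd_gcd ⟨a, hp⟩ ⟨b, hq⟩
  obtain ⟨e, he⟩ := hgd
  have hdp : d ∣ p := EuclideanDomain.gcd_dvd_left p q
  have hdq : d ∣ q := EuclideanDomain.gcd_dvd_right p q
  have hea : e ∣ a := by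
    have : g * e ∣ g * a := he ▸ hp ▸ hdp
    exact (mul_dvd_mul_iff_left hg).mp this
  have heb : e ∣ b := by
    have : g * e ∣ g * b := he ▸ hq ▸ hdq
    exact (mul_dvd_mul_iff_left hg).mp this
  have heu : IsUnit e := hab.isUnit_of_dvd' hea heb
  rw [gcdDeg, ← hd, he, Polynomial.natDegree_mul hg heu.ne_zero,
    Polynomial.natDegree_eq_zero_of_isUnit heu, add_zero]

/-- Forward: a nontrivial Sylvester kernel element forces gcd degree ≥ j. -/
lemma le_gcdDeg_of_syl {m n j : ℕ} (p q w v : ℂ[X]) (hp : p.degree = (m : WithBot ℕ))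
    (hq : q.degree = (n : WithBot ℕ)) (hw : w.natDegree ≤ n - j) (hv : v.natDegree ≤ m - j)
    (hjn : j ≤ n) (hwv : ¬(w = 0 ∧ v = 0)) (heq : p * w = q * v) : j ≤ gcdDeg p q := by
  have hp0 : p ≠ 0 := fun h => by simp [h] at hp
  have hq0 : q ≠ 0 := fun h => by simp [h] at hq
  have hw0 : w ≠ 0 := by
    rintro rfl
    rw [mul_zero] at heq
    exact hwv ⟨rfl, (mul_eq_zero.mp heq.symm).resolve_left hq0⟩
  set d := EuclideanDomain.gcd p q with hd
  set l := EuclideanDomain.lcm p q with hl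
  have hgl : d * l = p * q := EuclideanDomain.gcd_mul_lcm p q
  have hl0 : l ≠ 0 := by
    intro h
    rw [h, mul_zero] at hgl
    exact hp0 ((mul_eq_zero.mp hgl.symm).resolve_right hq0)
  have hd0 : d ≠ 0 := by
    intro h
    rw [h, zero_mul] at hgl
    exact hp0 ((mul_eq_zero.mp hgl.symm).resolve_right hq0)
  have hdvd : l ∣ p * w := EuclideanDomain.lcm_dvd ⟨w, rfl⟩ ⟨v, heq⟩
  have hpw0 : p * w ≠ 0 := mul_ne_zero hp0 hw0
  have h1 : l.natDegree ≤ p.natDegree + w.natDegree := by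
    have := Polynomial.natDegree_le_of_dvd hdvd hpw0
    rwa [Polynomial.natDegree_mul hp0 hw0] at this
  have h2 : d.natDegree + l.natDegree = p.natDegree + q.natDegree := by
    rw [← Polynomial.natDegree_mul hd0 hl0, hgl, Polynomial.natDegree_mul hp0 hq0]
  have hqn : q.natDegree = n := Polynomial.natDegree_eq_of_degree_eq_some hq
  have : gcdDeg p q = d.natDegree := rfl
  omega

/-- Backward: from gcd degree ≥ j, produce a Sylvester kernel element. -/
lemma exists_syl_of_gcdDeg {m n j : ℕ} (p q : ℂ[X]) (hp : p.degree = (m : WithBot ℕ))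
    (hq : q.degree = (n : WithBot ℕ)) (hj : j ≤ gcdDeg p q) :
    ∃ w v : ℂ[X], w ≠ 0 ∧ v ≠ 0 ∧ w.natDegree ≤ n - j ∧ v.natDegree ≤ m - j ∧
      p * w = q * v := by
  have hp0 : p ≠ 0 := fun h => by simp [h] at hp
  have hq0 : q ≠ 0 := fun h => by simp [h] at hq
  set d := EuclideanDomain.gcd p q with hd
  obtain ⟨a, ha⟩ := EuclideanDomain.gcd_dvd_left p q
  obtain ⟨b, hb⟩ := EuclideanDomain.gcd_dvd_right p q
  have hd0 : d ≠ 0 := fun h => hp0 (by rw [ha, ← hd, h, zero_mul])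
  have ha0 : a ≠ 0 := fun h => hp0 (by rw [ha, h, mul_zero])
  have hb0 : b ≠ 0 := fun h => hq0 (by rw [hb, h, mul_zero])
  refine ⟨b, a, hb0, ha0, ?_, ?_, ?_⟩
  · have hqn : q.natDegree = n := Polynomial.natDegree_eq_of_degree_eq_some hq
    have : d.natDegree + b.natDegree = n := by
      rw [← hqn, hb, Polynomial.natDegree_mul hd0 hb0]
    have : j ≤ d.natDegree := hj
    omega
  · have hpm : p.natDegree = m := Polynomial.natDegree_eq_of_degree_eq_some hp
    have : d.natDegree + a.natDegree = m := by
      rw [← hpm, ha, Polynomial.natDegree_mul hd0 ha0]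
    have : j ≤ d.natDegree := hj
    omega
  · conv_lhs => rw [ha]
    conv_rhs => rw [hb]
    ring

/-- No common root implies coprime, over ℂ. -/
lemma coprime_of_no_common_root_s7 (a b : ℂ[X]) (ha : a ≠ 0)
    (h : ∀ z : ℂ, a.eval z = 0 → b.eval z ≠ 0) : IsCoprime a b := by
  rw [← EuclideanDomain.gcd_isUnit_iff]
  set d := EuclideanDomain.gcd a b with hd
  have hd0 : d ≠ 0 := fun hh => ha ((EuclideanDomain.gcd_eq_zero_iff.mp hh).1)
  by_contra hu
  have hdeg : 0 < d.degree := by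
    by_contra h'
    push_neg at h'
    exact hu (Polynomial.isUnit_iff_degree_eq_zero.mpr
      (le_antisymm h' (Polynomial.zero_le_degree_iff.mpr hd0)))
  obtain ⟨z, hz⟩ := Complex.exists_root hdeg
  have hza : a.eval z = 0 := by
    obtain ⟨c, hc⟩ := EuclideanDomain.gcd_dvd_left a b
    rw [hc, Polynomial.eval_mul, hz, zero_mul]
  have hzb : b.eval z = 0 := by
    obtain ⟨c, hc⟩ := EuclideanDomain.gcd_dvd_right a b
    rw [hc, Polynomial.eval_mul, hz, zero_mul]
  exact h z hza hzb

noncomputable def wpoly (N : ℕ) (f : Fin (N + 1) → ℂ) : ℂ[X] :=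
  ∑ l : Fin (N + 1), Polynomial.monomial l (f l)

lemma coeff_wpoly (N : ℕ) (f : Fin (N + 1) → ℂ) (t : ℕ) :
    (wpoly N f).coeff t = if h : t < N + 1 then f ⟨t, h⟩ else 0 := by
  rw [wpoly, Polynomial.finset_sum_coeff]
  split_ifs with h
  · rw [Finset.sum_eq_single (⟨t, h⟩ : Fin (N + 1))]
    · simp [Polynomial.coeff_monomial]
    · intro l _ hl
      rw [Polynomial.coeff_monomial, if_neg]
      exact fun hc => hl (Fin.ext hc)
    · simp
  · apply Finset.sum_eq_zero
    intro l _
    rw [Polynomial.coeff_monomial, if_neg]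
    omega
lemma natDegree_wpoly (N : ℕ) (f : Fin (N + 1) → ℂ) : (wpoly N f).natDegree ≤ N := by
  rw [Polynomial.natDegree_le_iff_coeff_eq_zero]
  intro t ht
  rw [coeff_wpoly, dif_neg]
  omega

lemma wpoly_coeff (N : ℕ) (w : ℂ[X]) (h : w.natDegree ≤ N) :
    wpoly N (fun l => w.coeff l) = w := by
  ext t
  rw [coeff_wpoly]
  split_ifs with ht
  · rfl
  · exact (Polynomial.coeff_eq_zero_of_natDegree_lt (by omega)).symm

lemma wpoly_smul (N : ℕ) (c : ℂ) (f : Fin (N + 1) → ℂ) :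
    wpoly N (c • f) = Polynomial.C c * wpoly N f := by
  rw [wpoly, wpoly, Finset.mul_sum]
  refine Finset.sum_congr rfl fun l _ => ?_
  rw [Polynomial.C_mul_monomial]
  rfl

lemma wpoly_ne_zero (N : ℕ) (f : Fin (N + 1) → ℂ) (hf : f ≠ 0) : wpoly N f ≠ 0 := by
  obtain ⟨l, hl⟩ := Function.ne_iff.mp hf
  intro h
  apply hl
  have := coeff_wpoly N f l
  rw [h, Polynomial.coeff_zero] at this
  rw [dif_pos l.isLt] at this
  simpa using this.symm

lemma pmnk_nonempty' (m n j : ℕ) (hjm : j ≤ m) (hjn : j ≤ n) :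
    ∃ p q : ℂ[X], p.degree = (m : WithBot ℕ) ∧ q.degree = (n : WithBot ℕ) ∧
      gcdDeg p q = j := by
  have hX0 : (X : ℂ[X]) ^ m ≠ 0 := pow_ne_zero _ Polynomial.X_ne_zero
  have hXj0 : (X : ℂ[X]) ^ j ≠ 0 := pow_ne_zero _ Polynomial.X_ne_zero
  refine ⟨X ^ m, X ^ j * (X - C 1) ^ (n - j), Polynomial.degree_X_pow m, ?_, ?_⟩
  · have hmonic : (X ^ j * (X - C 1) ^ (n - j) : ℂ[X]).Monic :=
      (Polynomial.monic_X_pow j).mul ((Polynomial.monic_X_sub_C (1:ℂ)).pow _)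
    rw [Polynomial.degree_eq_natDegree hmonic.ne_zero]
    norm_cast
    rw [Polynomial.natDegree_mul hXj0
      ((Polynomial.monic_X_sub_C (1:ℂ)).pow _).ne_zero,
      Polynomial.natDegree_X_pow, Polynomial.natDegree_pow,
      Polynomial.natDegree_X_sub_C]
    omega
  · have hco : IsCoprime (X ^ (m - j) : ℂ[X]) ((X - C 1) ^ (n - j)) :=
      IsCoprime.pow ⟨1, -1, by rw [Polynomial.C_1]; ring⟩
    have h := gcdDeg_eq_of (X ^ j) (X ^ (m - j)) ((X - C 1) ^ (n - j))
      (X ^ m) (X ^ j * (X - C 1) ^ (n - j)) hXj0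
      (by rw [← pow_add]; congr 1; omega) rfl hco hX0
    rw [h, Polynomial.natDegree_X_pow]

/-- Small-perturbation construction: drop the gcd degree from k to j < k. -/
lemma exists_close_perturb (m n j k : ℕ) (ph qh : ℂ[X])
    (hph : ph.degree = (m : WithBot ℕ)) (hqh : qh.degree = (n : WithBot ℕ))
    (hg : gcdDeg ph qh = k) (hjk : j < k) {ε' : ℝ} (hε' : 0 < ε') :
    ∃ r s : ℂ[X], r.degree = (m : WithBot ℕ) ∧ s.degree = (n : WithBot ℕ) ∧
      gcdDeg r s = j ∧ pairNorm (ph - r) (qh - s) < ε' := by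
  have hph0 : ph ≠ 0 := fun h => by simp [h] at hph
  have hqh0 : qh ≠ 0 := fun h => by simp [h] at hqh
  set g := EuclideanDomain.gcd ph qh with hgdef
  have hg0 : g ≠ 0 := fun h => hph0 (EuclideanDomain.gcd_eq_zero_iff.mp h).1
  have hgk : g.natDegree = k := hg
  -- k ≤ n
  have hkn : k ≤ n := by
    have h1 : g.natDegree ≤ qh.natDegree :=
      Polynomial.natDegree_le_of_dvd (EuclideanDomain.gcd_dvd_right ph qh) hqh0
    rw [hgk, Polynomial.natDegree_eq_of_degree_eq_some hqh] at h1
    exact h1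
  -- roots of g, take j of them
  have hsplit : g.roots.card = g.natDegree :=
    (Polynomial.splits_iff_card_roots).mp (IsAlgClosed.splits g)
  set t : Multiset ℂ := ((g.roots.toList.take j : List ℂ) : Multiset ℂ) with ht
  have htle : t ≤ g.roots := by
    rw [ht]
    conv_rhs => rw [← Multiset.coe_toList g.roots]
    exact Multiset.coe_le.mpr ((List.take_sublist j g.roots.toList).subperm)
  have htcard : Multiset.card t = j := by
    rw [ht, Multiset.coe_card, List.length_take, Multiset.length_toList, hsplit, hgk]
    omega
  set g₁ : ℂ[X] := (t.map fun a => X - C a).prod with hg₁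
  have hg₁monic : g₁.Monic :=
    Polynomial.monic_multiset_prod_of_monic _ _ fun a _ => Polynomial.monic_X_sub_C a
  have hg₁0 : g₁ ≠ 0 := hg₁monic.ne_zero
  have hg₁deg : g₁.natDegree = j := by
    rw [hg₁, Polynomial.natDegree_multiset_prod_X_sub_C_eq_card, htcard]
  have hg₁g : g₁ ∣ g :=
    dvd_trans (Multiset.prod_dvd_prod_of_le (Multiset.map_le_map htle))
      (Polynomial.prod_multiset_X_sub_C_dvd g)
  obtain ⟨A, hA⟩ : g₁ ∣ ph := hg₁g.trans (EuclideanDomain.gcd_dvd_left ph qh)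
  obtain ⟨Q, hQ⟩ : g₁ ∣ qh := hg₁g.trans (EuclideanDomain.gcd_dvd_right ph qh)
  have hA0 : A ≠ 0 := fun h => hph0 (by rw [hA, h, mul_zero])
  -- choose a good small ε
  set δ : ℝ := ε' / (pnorm g₁ + 1) with hδ
  have hpg₁ : (0:ℝ) < pnorm g₁ + 1 := by linarith [pnorm_nonneg g₁]
  have hδ0 : 0 < δ := div_pos hε' hpg₁
  set F : Multiset ℂ := A.roots.map fun z => -Q.eval z with hF
  set c : ℕ := F.toFinset.card with hc
  set f : ℕ → ℂ := fun t => ((δ / (2 * (t + 1)) : ℝ) : ℂ) with hfdef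
  have hfinj : Function.Injective f := by
    intro a b hab
    rw [hfdef] at hab
    simp only [Complex.ofReal_inj] at hab
    rw [div_eq_div_iff (by positivity) (by positivity)] at hab
    have h2 : (2:ℝ) * (b + 1) = 2 * (a + 1) := mul_left_cancel₀ (ne_of_gt hδ0) hab
    have : (a:ℝ) = b := by linarith
    exact_mod_cast this
  have hex : ∃ t₀ : Fin (c + 1), f t₀ ∉ F.toFinset := by
    by_contra hcon
    push_neg at hcon
    have hinj2 : Function.Injective (fun t : Fin (c+1) => (⟨f t, hcon t⟩ : F.toFinset)) :=
      fun a b hab => Fin.ext (hfinj (congrArg Subtype.val hab))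
    have := Fintype.card_le_of_injective _ hinj2
    rw [Fintype.card_coe, Fintype.card_fin] at this
    omega
  obtain ⟨t₀, ht₀⟩ := hex
  set ε : ℂ := f t₀ with hε
  have hεnorm : ‖ε‖ < δ := by
    rw [hε, hfdef]
    simp only [Complex.norm_real, Real.norm_eq_abs]
    rw [abs_of_pos (by positivity)]
    rw [div_lt_iff₀ (by positivity)]
    nlinarith [hδ0, (by positivity : (0:ℝ) < (t₀:ℝ) + 1)]
  have hε0 : ε ≠ 0 := by
    rw [hε, hfdef]
    simp only [ne_eq, Complex.ofReal_eq_zero]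
    positivity
  -- the perturbed pair
  set s : ℂ[X] := qh + C ε * g₁ with hs
  set B : ℂ[X] := Q + C ε with hB
  have hsB : s = g₁ * B := by rw [hs, hB, hQ]; ring
  have hcop : IsCoprime A B := by
    refine coprime_of_no_common_root_s7 A B hA0 fun z hz hBz => ?_
    have hzmem : z ∈ A.roots := by
      rw [Polynomial.mem_roots hA0]
      exact hz
    have : ε = -Q.eval z := by
      rw [hB] at hBz
      simp only [Polynomial.eval_add, Polynomial.eval_C] at hBz
      linear_combination hBz
    exact absurd (Multiset.mem_toFinset.mpr (Multiset.mem_map.mpr ⟨z, hzmem, this.symm⟩)) ht₀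
  have hdegs : s.degree = (n : WithBot ℕ) := by
    rw [hs]
    rw [Polynomial.degree_add_eq_left_of_degree_lt, hqh]
    rw [hqh]
    calc (C ε * g₁).degree ≤ g₁.degree := by
          rw [Polynomial.degree_C_mul (by exact hε0)]
        _ = (j : WithBot ℕ) := by
          rw [Polynomial.degree_eq_natDegree hg₁0, hg₁deg]
        _ < (n : WithBot ℕ) := by exact_mod_cast (by omega : j < n)
  refine ⟨ph, s, hph, hdegs, ?_, ?_⟩
  · have := gcdDeg_eq_of g₁ A B ph s hg₁0 hA hsB hcop hph0
    rw [this, hg₁deg]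
  · have h1 : ph - ph = 0 := sub_self ph
    have h2 : qh - s = C (-ε) * g₁ := by rw [hs, Polynomial.C_neg]; ring
    rw [h1, h2, pairNorm_zero_C_mul, norm_neg]
    calc ‖ε‖ * pnorm g₁ ≤ ‖ε‖ * (pnorm g₁ + 1) := by
          have := norm_nonneg ε; nlinarith
      _ < δ * (pnorm g₁ + 1) := by
          apply mul_lt_mul_of_pos_right hεnorm hpg₁
      _ = ε' := by rw [hδ]; field_simp

open Filter Topology

lemma theta_pos_aux (m n j k : ℕ) (hjm : j ≤ m) (hjn : j ≤ n) (ph qh : ℂ[X])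
    (hph : ph.degree = (m : WithBot ℕ)) (hqh : qh.degree = (n : WithBot ℕ))
    (hgcd : gcdDeg ph qh = k) (hkj : k < j) : theta m n j ph qh ≠ 0 := by
  intro h0
  set S := ((fun rs : ℂ[X] × ℂ[X] => pairNorm (ph - rs.1) (qh - rs.2)) '' Pmnk m n j)
    with hS
  have hSne : S.Nonempty := by
    obtain ⟨p, q, hp, hq, hj'⟩ := pmnk_nonempty' m n j hjm hjn
    exact ⟨_, ⟨(p, q), ⟨⟨hp, hq⟩, hj'⟩, rfl⟩⟩
  have hseq : ∀ i : ℕ, ∃ rs : ℂ[X] × ℂ[X], rs ∈ Pmnk m n j ∧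
      pairNorm (ph - rs.1) (qh - rs.2) < 1 / (i + 1) := by
    intro i
    have hlt : sInf S < 1 / (i + 1 : ℝ) := by
      have : sInf S = theta m n j ph qh := by rw [hS]; rfl
      rw [this, h0]
      positivity
    obtain ⟨x, hxS, hx⟩ := exists_lt_of_csInf_lt hSne hlt
    obtain ⟨rs, hrs, rfl⟩ := hxS
    exact ⟨rs, hrs, hx⟩
  choose rs hmem hlt using hseq
  have hdeg1 : ∀ i, (rs i).1.degree = (m : WithBot ℕ) := fun i => (hmem i).1.1
  have hdeg2 : ∀ i, (rs i).2.degree = (n : WithBot ℕ) := fun i => (hmem i).1.2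
  have hgcdj : ∀ i, gcdDeg (rs i).1 (rs i).2 = j := fun i => (hmem i).2
  have hwv := fun i => exists_syl_of_gcdDeg (rs i).1 (rs i).2 (hdeg1 i) (hdeg2 i)
    (le_of_eq (hgcdj i).symm)
  choose w v hw0 hv0 hwdeg hvdeg heq using hwv
  -- coefficient vectors
  set W := ((Fin (n - j + 1) → ℂ) × (Fin (m - j + 1) → ℂ)) with hW
  set u : ℕ → W := fun i => (fun l => (w i).coeff l, fun l => (v i).coeff l) with hu
  have hu0 : ∀ i, u i ≠ 0 := by
    intro i h
    apply Polynomial.leadingCoeff_ne_zero.mpr (hw0 i)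
    have h1 : (u i).1 = 0 := by rw [h]; rfl
    have h2 := congrFun h1 ⟨(w i).natDegree, by have := hwdeg i; omega⟩
    exact h2
  set c : ℕ → ℂ := fun i => ((‖u i‖ : ℝ) : ℂ)⁻¹ with hc
  have hnorm_pos : ∀ i, 0 < ‖u i‖ := fun i => norm_pos_iff.mpr (hu0 i)
  have hcnorm : ∀ i, ‖c i‖ = ‖u i‖⁻¹ := by
    intro i
    rw [hc, norm_inv, Complex.norm_real, Real.norm_eq_abs, abs_of_pos (hnorm_pos i)]
  set u' : ℕ → W := fun i => c i • u i with hu'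
  have hu'sphere : ∀ i, u' i ∈ Metric.sphere (0 : W) 1 := by
    intro i
    rw [mem_sphere_zero_iff_norm, hu', norm_smul, hcnorm,
      inv_mul_cancel₀ (ne_of_gt (hnorm_pos i))]
  obtain ⟨U, hUmem, φ, hφmono, hφtend⟩ :=
    (isCompact_sphere (0 : W) 1).tendsto_subseq hu'sphere
  have hU1 : ‖U‖ = 1 := mem_sphere_zero_iff_norm.mp hUmem
  have hU0 : U ≠ 0 := fun h => by simp [h] at hU1
  set winf : ℂ[X] := wpoly (n - j) U.1 with hwinf
  set vinf : ℂ[X] := wpoly (m - j) U.2 with hvinf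
  have hwvne : ¬(winf = 0 ∧ vinf = 0) := by
    rintro ⟨h1, h2⟩
    apply hU0
    have hU1z : U.1 = 0 := by
      by_contra hne
      exact wpoly_ne_zero _ _ hne h1
    have hU2z : U.2 = 0 := by
      by_contra hne
      exact wpoly_ne_zero _ _ hne h2
    exact Prod.ext hU1z hU2z
  -- scaled polynomials
  set w' : ℕ → ℂ[X] := fun i => Polynomial.C (c i) * w i with hw'
  set v' : ℕ → ℂ[X] := fun i => Polynomial.C (c i) * v i with hv'
  have hw'eq : ∀ i, w' i = wpoly (n - j) ((u' i).1) := by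
    intro i
    have : (u' i).1 = c i • (u i).1 := rfl
    rw [this, wpoly_smul, hu]
    simp only
    rw [wpoly_coeff _ _ (hwdeg i)]
  have hv'eq : ∀ i, v' i = wpoly (m - j) ((u' i).2) := by
    intro i
    have : (u' i).2 = c i • (u i).2 := rfl
    rw [this, wpoly_smul, hu]
    simp only
    rw [wpoly_coeff _ _ (hvdeg i)]
  have hrel : ∀ i, (rs i).1 * w' i = (rs i).2 * v' i := by
    intro i
    rw [hw', hv']
    calc (rs i).1 * (Polynomial.C (c i) * w i) = Polynomial.C (c i) * ((rs i).1 * w i) := by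
          ring
      _ = Polynomial.C (c i) * ((rs i).2 * v i) := by rw [heq i]
      _ = (rs i).2 * (Polynomial.C (c i) * v i) := by ring
  -- coefficientwise convergence of rs ∘ φ to (ph, qh)
  have hbound : Tendsto (fun i : ℕ => 1 / ((i : ℝ) + 1)) atTop (𝓝 0) :=
    tendsto_one_div_add_atTop_nhds_zero_nat
  have hconv_r : ∀ a : ℕ, Tendsto (fun i => ((rs (φ i)).1).coeff a) atTop (𝓝 (ph.coeff a)) := by
    intro a
    rw [tendsto_iff_norm_sub_tendsto_zero]
    apply squeeze_zero (fun i => norm_nonneg _) (g := fun i : ℕ => 1 / ((i : ℝ) + 1))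
    · intro i
      have h1 : ‖((rs (φ i)).1).coeff a - ph.coeff a‖ = ‖(ph - (rs (φ i)).1).coeff a‖ := by
        rw [Polynomial.coeff_sub, norm_sub_rev]
      rw [h1]
      calc ‖(ph - (rs (φ i)).1).coeff a‖ ≤ pnorm (ph - (rs (φ i)).1) :=
            norm_coeff_le_pnorm _ _
        _ ≤ pairNorm (ph - (rs (φ i)).1) (qh - (rs (φ i)).2) := pnorm_le_pairNorm_left _ _
        _ ≤ 1 / ((φ i : ℝ) + 1) := le_of_lt (hlt (φ i))
        _ ≤ 1 / ((i : ℝ) + 1) := by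
            apply one_div_le_one_div_of_le (by positivity)
            have h9 : (i : ℝ) ≤ (φ i : ℝ) := by exact_mod_cast hφmono.le_apply
            linarith
    · exact hbound
  have hconv_s : ∀ a : ℕ, Tendsto (fun i => ((rs (φ i)).2).coeff a) atTop (𝓝 (qh.coeff a)) := by
    intro a
    rw [tendsto_iff_norm_sub_tendsto_zero]
    apply squeeze_zero (fun i => norm_nonneg _) (g := fun i : ℕ => 1 / ((i : ℝ) + 1))
    · intro i
      have h1 : ‖((rs (φ i)).2).coeff a - qh.coeff a‖ = ‖(qh - (rs (φ i)).2).coeff a‖ := by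
        rw [Polynomial.coeff_sub, norm_sub_rev]
      rw [h1]
      calc ‖(qh - (rs (φ i)).2).coeff a‖ ≤ pnorm (qh - (rs (φ i)).2) :=
            norm_coeff_le_pnorm _ _
        _ ≤ pairNorm (ph - (rs (φ i)).1) (qh - (rs (φ i)).2) := pnorm_le_pairNorm_right _ _
        _ ≤ 1 / ((φ i : ℝ) + 1) := le_of_lt (hlt (φ i))
        _ ≤ 1 / ((i : ℝ) + 1) := by
            apply one_div_le_one_div_of_le (by positivity)
            have h9 : (i : ℝ) ≤ (φ i : ℝ) := by exact_mod_cast hφmono.le_apply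
            linarith
    · exact hbound
  -- coefficientwise convergence of w' ∘ φ to winf
  have hconv_w : ∀ a : ℕ, Tendsto (fun i => (w' (φ i)).coeff a) atTop (𝓝 (winf.coeff a)) := by
    intro a
    by_cases ha : a < n - j + 1
    · have hre : ∀ i, (w' (φ i)).coeff a = (u' (φ i)).1 ⟨a, ha⟩ := by
        intro i
        rw [hw'eq, coeff_wpoly, dif_pos ha]
      have hlim : winf.coeff a = U.1 ⟨a, ha⟩ := by
        rw [hwinf, coeff_wpoly, dif_pos ha]
      simp only [hre, hlim]
      have hcont : Continuous (fun x : W => x.1 ⟨a, ha⟩) :=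
        (continuous_apply _).comp continuous_fst
      exact (hcont.tendsto U).comp hφtend
    · have hre : ∀ i, (w' (φ i)).coeff a = 0 := by
        intro i
        rw [hw'eq, coeff_wpoly, dif_neg ha]
      have hlim : winf.coeff a = 0 := by
        rw [hwinf, coeff_wpoly, dif_neg ha]
      simp only [hre, hlim]
      exact tendsto_const_nhds
  have hconv_v : ∀ a : ℕ, Tendsto (fun i => (v' (φ i)).coeff a) atTop (𝓝 (vinf.coeff a)) := by
    intro a
    by_cases ha : a < m - j + 1
    · have hre : ∀ i, (v' (φ i)).coeff a = (u' (φ i)).2 ⟨a, ha⟩ := by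
        intro i
        rw [hv'eq, coeff_wpoly, dif_pos ha]
      have hlim : vinf.coeff a = U.2 ⟨a, ha⟩ := by
        rw [hvinf, coeff_wpoly, dif_pos ha]
      simp only [hre, hlim]
      have hcont : Continuous (fun x : W => x.2 ⟨a, ha⟩) :=
        (continuous_apply _).comp continuous_snd
      exact (hcont.tendsto U).comp hφtend
    · have hre : ∀ i, (v' (φ i)).coeff a = 0 := by
        intro i
        rw [hv'eq, coeff_wpoly, dif_neg ha]
      have hlim : vinf.coeff a = 0 := by
        rw [hvinf, coeff_wpoly, dif_neg ha]
      simp only [hre, hlim]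
      exact tendsto_const_nhds
  -- pass the Sylvester relation to the limit
  have heqinf : ph * winf = qh * vinf := by
    ext l
    have hT1 : Tendsto (fun i => ((rs (φ i)).1 * w' (φ i)).coeff l) atTop
        (𝓝 ((ph * winf).coeff l)) := by
      simp only [Polynomial.coeff_mul]
      exact tendsto_finset_sum _ fun x _ => (hconv_r x.1).mul (hconv_w x.2)
    have hT2 : Tendsto (fun i => ((rs (φ i)).2 * v' (φ i)).coeff l) atTop
        (𝓝 ((qh * vinf).coeff l)) := by
      simp only [Polynomial.coeff_mul]
      exact tendsto_finset_sum _ fun x _ => (hconv_s x.1).mul (hconv_v x.2)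
    have hzero : (fun i => ((rs (φ i)).1 * w' (φ i)).coeff l -
        ((rs (φ i)).2 * v' (φ i)).coeff l) = fun _ => (0 : ℂ) := by
      funext i
      rw [hrel (φ i), sub_self]
    have hT3 : Tendsto (fun i => ((rs (φ i)).1 * w' (φ i)).coeff l -
        ((rs (φ i)).2 * v' (φ i)).coeff l) atTop
        (𝓝 ((ph * winf).coeff l - (qh * vinf).coeff l)) := hT1.sub hT2
    rw [hzero] at hT3
    have := tendsto_nhds_unique hT3 tendsto_const_nhds
    linear_combination this
  have hfinal : j ≤ gcdDeg ph qh :=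
    le_gcdDeg_of_syl ph qh winf vinf hph hqh (natDegree_wpoly _ _) (natDegree_wpoly _ _)
      hjn hwvne heqinf
  omega


/-- For (p̂,q̂) ∈ 𝒫ᵏ_{m,n}, the distance θ_j(p̂,q̂) vanishes exactly when j ≤ k. -/
theorem theta_zero_iff (m n k : ℕ) (hm : 1 ≤ m) (hn : 1 ≤ n) (hk : k ≤ min m n)
    (ph qh : ℂ[X]) (hmem : (ph, qh) ∈ Pmnk m n k) :
    (∀ j : ℕ, j ≤ min m n → (theta m n j ph qh = 0 ↔ j ≤ k)) ∧
    (k < min m n → 0 < theta m n (k + 1) ph qh) := by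
  obtain ⟨⟨hph, hqh⟩, hgcdk⟩ := hmem
  have hlow : ∀ j : ℕ, 0 ≤ theta m n j ph qh := by
    intro j
    apply Real.sInf_nonneg
    rintro x ⟨rsp, _, rfl⟩
    exact pairNorm_nonneg _ _
  have hbdd : ∀ j : ℕ, BddBelow
      ((fun rs : ℂ[X] × ℂ[X] => pairNorm (ph - rs.1) (qh - rs.2)) '' Pmnk m n j) := by
    intro j
    refine ⟨0, ?_⟩
    rintro x ⟨rsp, _, rfl⟩
    exact pairNorm_nonneg _ _
  have hmain : ∀ j : ℕ, j ≤ min m n → (theta m n j ph qh = 0 ↔ j ≤ k) := by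
    intro j hj
    constructor
    · intro h0
      by_contra hjk
      push_neg at hjk
      exact theta_pos_aux m n j k (le_trans hj (min_le_left m n))
        (le_trans hj (min_le_right m n)) ph qh hph hqh hgcdk hjk h0
    · intro hjk
      refine le_antisymm ?_ (hlow j)
      rcases eq_or_lt_of_le hjk with rfl | hlt
      · -- j = k : (ph, qh) itself is in the manifold
        have h0mem : (0 : ℝ) ∈
            ((fun rs : ℂ[X] × ℂ[X] => pairNorm (ph - rs.1) (qh - rs.2)) '' Pmnk m n j) := by
          refine ⟨(ph, qh), ⟨⟨hph, hqh⟩, hgcdk⟩, ?_⟩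
          simp only [sub_self]
          rw [pairNorm, pnormSq_zero, add_zero, Real.sqrt_zero]
        exact csInf_le (hbdd j) h0mem
      · -- j < k : perturbation argument
        by_contra hpos
        push_neg at hpos
        obtain ⟨r, s, hr, hs, hrs, hclose⟩ :=
          exists_close_perturb m n j k ph qh hph hqh hgcdk hlt hpos
        have hle : theta m n j ph qh ≤ pairNorm (ph - r) (qh - s) :=
          csInf_le (hbdd j) ⟨(r, s), ⟨⟨hr, hs⟩, hrs⟩, rfl⟩
        exact absurd (lt_of_le_of_lt hle hclose) (lt_irrefl _)
  refine ⟨hmain, fun hkmin => ?_⟩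
  have h1 := hmain (k + 1) (by omega)
  have h2 : theta m n (k + 1) ph qh ≠ 0 := fun h => by have := h1.mp h; omega
  exact lt_of_le_of_ne (hlow (k + 1)) (Ne.symm h2)
end

section
/- Let m, n ≥ 1, 0 ≤ k ≤ min(m,n), and let (p̂,q̂) ∈ 𝒫ᵏ_{m,n}. Then there exists θ > 0 such that for every pair (p,q) ∈ 𝒞_{m,n} with ‖(p−p̂, q−q̂)‖ < θ, the infimum θ_k(p,q) is attained: there exists (p̃,q̃) ∈ 𝒫ᵏ_{m,n} with ‖(p−p̃, q−q̃)‖ = θ_k(p,q). Moreover any such minimizer satisfies ‖(p̃−p̂, q̃−q̂)‖ ≤ 2‖(p−p̂, q−q̂)‖, so the minimizing pair converges to (p̂,q̂) as (p,q) → (p̂,q̂). -/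
open Polynomial

/-! ### Auxiliary gcd lemmas -/

lemma gcdDeg_le_left {r s : ℂ[X]} (hr : r ≠ 0) : gcdDeg r s ≤ r.natDegree :=
  Polynomial.natDegree_le_of_dvd (EuclideanDomain.gcd_dvd_left r s) hr

lemma gcdDeg_le_right {r s : ℂ[X]} (hs : s ≠ 0) : gcdDeg r s ≤ s.natDegree :=
  Polynomial.natDegree_le_of_dvd (EuclideanDomain.gcd_dvd_right r s) hs

/-- Direction (a): a gcd of degree ≥ j yields a nontrivial Sylvester kernel element. -/
lemma exists_kernel_of_gcdDeg {m n j : ℕ} {r s : ℂ[X]} (hr : r.natDegree = m)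
    (hs : s.natDegree = n) (hr0 : r ≠ 0) (hs0 : s ≠ 0) (hj : j ≤ gcdDeg r s) :
    ∃ w v : ℂ[X], ¬(w = 0 ∧ v = 0) ∧ w.natDegree ≤ n - j ∧ v.natDegree ≤ m - j ∧
      r * w = s * v := by
  set g := EuclideanDomain.gcd r s with hgdef
  have hg0 : g ≠ 0 := fun h => hr0 (EuclideanDomain.gcd_eq_zero_iff.mp h).1
  have hgr : g ∣ r := EuclideanDomain.gcd_dvd_left r s
  have hgs : g ∣ s := EuclideanDomain.gcd_dvd_right r s
  refine ⟨s / g, r / g, ?_, ?_, ?_, ?_⟩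
  · rintro ⟨h1, -⟩
    have := EuclideanDomain.mul_div_cancel' hg0 hgs
    rw [h1, mul_zero] at this
    exact hs0 this.symm
  · have hmul : g * (s / g) = s := EuclideanDomain.mul_div_cancel' hg0 hgs
    have hsg0 : s / g ≠ 0 := by intro h; rw [h, mul_zero] at hmul; exact hs0 hmul.symm
    have hgd : gcdDeg r s = g.natDegree := rfl
    have : g.natDegree + (s / g).natDegree = n := by
      rw [← hs]; conv_rhs => rw [← hmul]
      rw [Polynomial.natDegree_mul hg0 hsg0]
    omega
  · have hmul : g * (r / g) = r := EuclideanDomain.mul_div_cancel' hg0 hgr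
    have hrg0 : r / g ≠ 0 := by intro h; rw [h, mul_zero] at hmul; exact hr0 hmul.symm
    have hgd : gcdDeg r s = g.natDegree := rfl
    have : g.natDegree + (r / g).natDegree = m := by
      rw [← hr]; conv_rhs => rw [← hmul]
      rw [Polynomial.natDegree_mul hg0 hrg0]
    omega
  · have h1 : g * (s / g) = s := EuclideanDomain.mul_div_cancel' hg0 hgs
    have h2 : g * (r / g) = r := EuclideanDomain.mul_div_cancel' hg0 hgr
    have : g * (r * (s / g)) = g * (s * (r / g)) := by
      rw [mul_left_comm, h1, mul_left_comm, h2, mul_comm]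
    exact mul_left_cancel₀ hg0 this

/-- Direction (b): a nontrivial Sylvester kernel element forces the gcd degree up. -/
lemma gcdDeg_ge_of_kernel {m n j : ℕ} {r s w v : ℂ[X]} (hr : r.natDegree = m)
    (hs : s.natDegree = n) (hr0 : r ≠ 0) (hs0 : s ≠ 0) (hjn : j ≤ n)
    (hwv : ¬(w = 0 ∧ v = 0)) (hw : w.natDegree ≤ n - j) (hv : v.natDegree ≤ m - j)
    (heq : r * w = s * v) : j ≤ gcdDeg r s := by
  set g := EuclideanDomain.gcd r s with hgdef
  have hg0 : g ≠ 0 := fun h => hr0 (EuclideanDomain.gcd_eq_zero_iff.mp h).1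
  have hgr : g ∣ r := EuclideanDomain.gcd_dvd_left r s
  have hgs : g ∣ s := EuclideanDomain.gcd_dvd_right r s
  have hw0 : w ≠ 0 := by
    rintro rfl
    rw [mul_zero] at heq
    rcases mul_eq_zero.mp heq.symm with h | h
    · exact hs0 h
    · exact hwv ⟨rfl, h⟩
  set r' := r / g with hr'def
  set s' := s / g with hs'def
  have h1 : g * s' = s := EuclideanDomain.mul_div_cancel' hg0 hgs
  have h2 : g * r' = r := EuclideanDomain.mul_div_cancel' hg0 hgr
  have hs'0 : s' ≠ 0 := by intro h; rw [h, mul_zero] at h1; exact hs0 h1.symm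
  have hbez : g = r * EuclideanDomain.gcdA r s + s * EuclideanDomain.gcdB r s :=
    EuclideanDomain.gcd_eq_gcd_ab r s
  have hcop : IsCoprime r' s' := by
    refine ⟨EuclideanDomain.gcdA r s, EuclideanDomain.gcdB r s, ?_⟩
    have : g * (EuclideanDomain.gcdA r s * r' + EuclideanDomain.gcdB r s * s') = g * 1 := by
      rw [mul_one, mul_add, mul_left_comm, h2, mul_left_comm, h1]
      rw [hbez]; ring
    exact mul_left_cancel₀ hg0 this
  have heq' : r' * w = s' * v := by
    apply mul_left_cancel₀ hg0
    rw [← mul_assoc, h2, ← mul_assoc, h1, heq]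
  have hdvd : s' ∣ w := by
    have hh : s' ∣ r' * w := ⟨v, heq'⟩
    exact hcop.symm.dvd_of_dvd_mul_left hh
  have hds' : s'.natDegree ≤ n - j := le_trans (Polynomial.natDegree_le_of_dvd hdvd hw0) hw
  have hsum : g.natDegree + s'.natDegree = n := by
    rw [← hs]; conv_rhs => rw [← h1]
    rw [Polynomial.natDegree_mul hg0 hs'0]
  have hgd : gcdDeg r s = g.natDegree := rfl
  omega

/-! ### Coefficient-vector coordinates -/

/-- Polynomial built from a coefficient vector of length `d+1`. -/
noncomputable def ofE (d : ℕ) (f : Fin (d+1) → ℂ) : ℂ[X] :=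
  ∑ i : Fin (d+1), Polynomial.monomial (i : ℕ) (f i)

/-- The Euclidean model for pairs of polynomials of degrees ≤ d, ≤ e. -/
abbrev E2 (d e : ℕ) := EuclideanSpace ℂ (Fin (d+1) ⊕ Fin (e+1))

/-- Coefficient vector of a pair of polynomials. -/
noncomputable def pairToE (d e : ℕ) (pq : ℂ[X] × ℂ[X]) : E2 d e :=
  WithLp.toLp 2 (Sum.elim (fun i : Fin (d+1) => pq.1.coeff i) (fun i : Fin (e+1) => pq.2.coeff i))

/-- Pair of polynomials built from a Euclidean coefficient vector. -/
noncomputable def EtoPair (d e : ℕ) (z : E2 d e) : ℂ[X] × ℂ[X] :=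
  (ofE d (fun i => z (Sum.inl i)), ofE e (fun i => z (Sum.inr i)))

lemma coeff_ofE (d : ℕ) (f : Fin (d+1) → ℂ) (t : ℕ) :
    (ofE d f).coeff t = if h : t < d+1 then f ⟨t, h⟩ else 0 := by
  rw [ofE, Polynomial.finset_sum_coeff]
  simp only [Polynomial.coeff_monomial]
  split_ifs with h
  · rw [Finset.sum_eq_single (⟨t, h⟩ : Fin (d+1))]
    · simp
    · intro b _ hb
      rw [if_neg]
      intro hbt
      exact hb (by ext; simp [hbt])
    · simp
  · apply Finset.sum_eq_zero
    intro b _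
    rw [if_neg]
    intro hbt
    exact h (hbt ▸ b.isLt)

lemma degree_ofE_le (d : ℕ) (f : Fin (d+1) → ℂ) : (ofE d f).degree ≤ (d : WithBot ℕ) := by
  apply Polynomial.degree_le_iff_coeff_zero _ _ |>.mpr
  intro t ht
  rw [coeff_ofE]
  split_ifs with h
  · exfalso
    have : (t : WithBot ℕ) ≤ (d : WithBot ℕ) := by
      exact_mod_cast Nat.le_of_lt_succ h
    exact absurd ht (not_lt.mpr this)
  · rfl

lemma ofE_coeff (d : ℕ) (p : ℂ[X]) (hp : p.degree ≤ (d : WithBot ℕ)) :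
    ofE d (fun i => p.coeff i) = p := by
  ext t
  rw [coeff_ofE]
  split_ifs with h
  · rfl
  · symm
    apply Polynomial.coeff_eq_zero_of_degree_lt
    apply lt_of_le_of_lt hp
    exact_mod_cast Nat.lt_of_succ_le (not_lt.mp h)

lemma ofE_smul (d : ℕ) (c : ℂ) (f : Fin (d+1) → ℂ) : ofE d (c • f) = c • ofE d f := by
  rw [ofE, ofE, Finset.smul_sum]
  apply Finset.sum_congr rfl
  intro i _
  simp [Polynomial.smul_monomial]

lemma coeff_ofE_mul (d e : ℕ) (f : Fin (d+1) → ℂ) (g : Fin (e+1) → ℂ) (t : ℕ) :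
    (ofE d f * ofE e g).coeff t =
      ∑ a : Fin (d+1), ∑ b : Fin (e+1), if (a:ℕ) + (b:ℕ) = t then f a * g b else 0 := by
  rw [ofE, ofE, Finset.sum_mul_sum]
  rw [Polynomial.finset_sum_coeff]
  apply Finset.sum_congr rfl
  intro a _
  rw [Polynomial.finset_sum_coeff]
  apply Finset.sum_congr rfl
  intro b _
  rw [Polynomial.monomial_mul_monomial, Polynomial.coeff_monomial]

lemma pairToE_EtoPair (d e : ℕ) (z : E2 d e) : pairToE d e (EtoPair d e z) = z := by
  ext i
  cases i with
  | inl a => simp [pairToE, EtoPair, coeff_ofE, a.isLt]; intro h; exact absurd h (by have := a.isLt; omega)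
  | inr b => simp [pairToE, EtoPair, coeff_ofE, b.isLt]; intro h; exact absurd h (by have := b.isLt; omega)

lemma EtoPair_pairToE (d e : ℕ) (p q : ℂ[X]) (hp : p.degree ≤ (d : WithBot ℕ))
    (hq : q.degree ≤ (e : WithBot ℕ)) : EtoPair d e (pairToE d e (p, q)) = (p, q) := by
  rw [EtoPair]
  exact Prod.ext (ofE_coeff d p hp) (ofE_coeff e q hq)

lemma EtoPair_smul (d e : ℕ) (c : ℂ) (z : E2 d e) :
    EtoPair d e (c • z) = c • EtoPair d e z := by
  rw [EtoPair, EtoPair, Prod.smul_mk]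
  congr 1 <;> rw [← ofE_smul] <;> rfl

lemma pairToE_zero (d e : ℕ) : pairToE d e (0, 0) = 0 := by
  ext i
  cases i <;> simp [pairToE] <;> rfl

lemma pnormSq_eq_sum (d : ℕ) (p : ℂ[X]) (hp : p.degree ≤ (d : WithBot ℕ)) :
    ∑ i : Fin (d+1), ‖p.coeff i‖ ^ 2 = pnormSq p := by
  rw [pnormSq]
  rw [Fin.sum_univ_eq_sum_range (fun i => ‖p.coeff i‖ ^ 2) (d+1)]
  symm
  apply Finset.sum_subset
  · intro i hi
    rw [Finset.mem_range]
    have := Polynomial.le_degree_of_ne_zero (Polynomial.mem_support_iff.mp hi)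
    have h2 : (i : WithBot ℕ) ≤ (d : WithBot ℕ) := le_trans this hp
    exact Nat.lt_succ_of_le (by exact_mod_cast h2)
  · intro i _ hi
    rw [Polynomial.notMem_support_iff.mp hi]
    simp

lemma norm_pairToE (d e : ℕ) (p q : ℂ[X]) (hp : p.degree ≤ (d : WithBot ℕ))
    (hq : q.degree ≤ (e : WithBot ℕ)) : ‖pairToE d e (p, q)‖ = pairNorm p q := by
  rw [EuclideanSpace.norm_eq, pairNorm]
  congr 1
  rw [Fintype.sum_sum_type, ← pnormSq_eq_sum d p hp, ← pnormSq_eq_sum e q hq]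
  rfl

lemma pairToE_sub (d e : ℕ) (p q r s : ℂ[X]) :
    pairToE d e (p, q) - pairToE d e (r, s) = pairToE d e (p - r, q - s) := by
  ext i
  cases i <;> simp [pairToE] <;> rfl

/-! ### The closed kernel sets -/

/-- The set of coefficient vectors whose polynomial pair admits a nontrivial
Sylvester kernel element with coefficient vector in `E2 a b`. -/
def ZSet (m n a b : ℕ) : Set (E2 m n) :=
  {z | ∃ u : E2 a b, u ≠ 0 ∧
    (EtoPair m n z).1 * (EtoPair a b u).1 = (EtoPair m n z).2 * (EtoPair a b u).2}

lemma continuous_coeffMulFst (m n a b : ℕ) (t : ℕ) :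
    Continuous (fun zu : E2 m n × E2 a b =>
      ((EtoPair m n zu.1).1 * (EtoPair a b zu.2).1).coeff t) := by
  simp only [EtoPair, coeff_ofE_mul]
  apply continuous_finset_sum
  intro i _
  apply continuous_finset_sum
  intro j _
  split_ifs with h
  · exact (((EuclideanSpace.proj (Sum.inl i)).continuous.comp continuous_fst).mul
      ((EuclideanSpace.proj (Sum.inl j)).continuous.comp continuous_snd))
  · exact continuous_const

lemma continuous_coeffMulSnd (m n a b : ℕ) (t : ℕ) :
    Continuous (fun zu : E2 m n × E2 a b =>
      ((EtoPair m n zu.1).2 * (EtoPair a b zu.2).2).coeff t) := by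
  simp only [EtoPair, coeff_ofE_mul]
  apply continuous_finset_sum
  intro i _
  apply continuous_finset_sum
  intro j _
  split_ifs with h
  · exact (((EuclideanSpace.proj (Sum.inr i)).continuous.comp continuous_fst).mul
      ((EuclideanSpace.proj (Sum.inr j)).continuous.comp continuous_snd))
  · exact continuous_const

lemma isClosed_ZSet (m n a b : ℕ) : IsClosed (ZSet m n a b) := by
  apply IsSeqClosed.isClosed
  intro zs z hzs hz
  choose u hu0 hueq using hzs
  set uh : ℕ → E2 a b := fun i => ((‖u i‖ : ℂ))⁻¹ • u i with huh
  have hnorm : ∀ i, uh i ∈ Metric.sphere (0 : E2 a b) 1 := by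
    intro i
    have : ‖((‖u i‖ : ℂ))⁻¹‖ = ‖u i‖⁻¹ := by
      rw [norm_inv, Complex.norm_real, norm_norm]
    rw [mem_sphere_zero_iff_norm, huh, norm_smul, this,
      inv_mul_cancel₀ (norm_ne_zero_iff.mpr (hu0 i))]
  have hueq' : ∀ i, (EtoPair m n (zs i)).1 * (EtoPair a b (uh i)).1
      = (EtoPair m n (zs i)).2 * (EtoPair a b (uh i)).2 := by
    intro i
    rw [huh]
    simp only [EtoPair_smul, Prod.smul_fst, Prod.smul_snd]
    rw [mul_smul_comm, mul_smul_comm, hueq i]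
  obtain ⟨ul, hul, phi, hphi, htend⟩ :=
    (isCompact_sphere (0 : E2 a b) 1).tendsto_subseq hnorm
  refine ⟨ul, ?_, ?_⟩
  · intro h
    rw [h] at hul
    simp at hul
  · have hz' : Filter.Tendsto (zs ∘ phi) Filter.atTop (nhds z) :=
      hz.comp hphi.tendsto_atTop
    ext t
    have H1 := ((continuous_coeffMulFst m n a b t).tendsto (z, ul)).comp
      (hz'.prodMk_nhds htend)
    have H2 := ((continuous_coeffMulSnd m n a b t).tendsto (z, ul)).comp
      (hz'.prodMk_nhds htend)
    have H1' := H1.congr (fun i => congrArg (fun p => Polynomial.coeff p t) (hueq' (phi i)))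
    exact tendsto_nhds_unique H1' H2

/-- Membership in `ZSet` from an explicit kernel pair of polynomials. -/
lemma mem_ZSet_of_kernel {m n a b : ℕ} (z : E2 m n) (w v : ℂ[X])
    (hwv : ¬(w = 0 ∧ v = 0)) (hw : w.degree ≤ (a : WithBot ℕ)) (hv : v.degree ≤ (b : WithBot ℕ))
    (heq : (EtoPair m n z).1 * w = (EtoPair m n z).2 * v) : z ∈ ZSet m n a b := by
  refine ⟨pairToE a b (w, v), ?_, ?_⟩
  · intro h
    have h2 := EtoPair_pairToE a b w v hw hv
    rw [h] at h2
    have h0 : EtoPair a b (0 : E2 a b) = (0, 0) := by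
      have e1 : (fun i : Fin (a+1) => (0 : E2 a b) (Sum.inl i)) = (fun _ => (0:ℂ)) := rfl
      have e2 : (fun i : Fin (b+1) => (0 : E2 a b) (Sum.inr i)) = (fun _ => (0:ℂ)) := rfl
      rw [EtoPair, e1, e2]
      simp [ofE]
    rw [h0] at h2
    exact hwv ⟨(congrArg Prod.fst h2).symm, (congrArg Prod.snd h2).symm⟩
  · rw [EtoPair_pairToE a b w v hw hv]
    exact heq

/-- Kernel pair of polynomials from membership in `ZSet`. -/
lemma kernel_of_mem_ZSet {m n a b : ℕ} (z : E2 m n) (hz : z ∈ ZSet m n a b) :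
    ∃ w v : ℂ[X], ¬(w = 0 ∧ v = 0) ∧ w.degree ≤ (a : WithBot ℕ) ∧ v.degree ≤ (b : WithBot ℕ) ∧
      (EtoPair m n z).1 * w = (EtoPair m n z).2 * v := by
  obtain ⟨u, hu0, hueq⟩ := hz
  refine ⟨(EtoPair a b u).1, (EtoPair a b u).2, ?_, degree_ofE_le _ _, degree_ofE_le _ _, hueq⟩
  rintro ⟨h1, h2⟩
  apply hu0
  have := pairToE_EtoPair a b u
  rw [show EtoPair a b u = (0, 0) from Prod.ext h1 h2, pairToE_zero] at this
  exact this.symm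


lemma degree_coe_le_of_natDegree_le {p : ℂ[X]} {d : ℕ} (h : p.natDegree ≤ d) :
    p.degree ≤ (d : WithBot ℕ) :=
  le_trans Polynomial.degree_le_natDegree (by exact_mod_cast h)

lemma ne_zero_of_degree_coe {p : ℂ[X]} {d : ℕ} (h : p.degree = (d : WithBot ℕ)) : p ≠ 0 := by
  intro h0
  rw [h0, Polynomial.degree_zero] at h
  exact (WithBot.bot_ne_coe h)

/-- Locally near a point of `Pmnk`, the closure of the coefficient-vector image of
`Pmnk` agrees with the image itself. -/
lemma local_graph (m n k : ℕ) (hk : k ≤ min m n)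
    (ph qh : ℂ[X]) (hmem : (ph, qh) ∈ Pmnk m n k) :
    ∃ ε > 0, ∀ z ∈ closure (pairToE m n '' Pmnk m n k),
      z ∈ Metric.ball (pairToE m n (ph, qh)) ε → z ∈ pairToE m n '' Pmnk m n k := by
  obtain ⟨⟨hphd, hqhd⟩, hgcd⟩ := hmem
  simp only at hphd hqhd hgcd
  have hphn : ph.natDegree = m := Polynomial.natDegree_eq_of_degree_eq_some hphd
  have hqhn : qh.natDegree = n := Polynomial.natDegree_eq_of_degree_eq_some hqhd
  have hph0 : ph ≠ 0 := ne_zero_of_degree_coe hphd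
  have hqh0 : qh ≠ 0 := ne_zero_of_degree_coe hqhd
  set im : Fin (m+1) := ⟨m, Nat.lt_succ_self m⟩
  set jn : Fin (n+1) := ⟨n, Nat.lt_succ_self n⟩
  set U : Set (E2 m n) :=
    {z | z (Sum.inl im) ≠ 0} ∩ {z | z (Sum.inr jn) ≠ 0} ∩
      (if k < min m n then (ZSet m n (n-(k+1)) (m-(k+1)))ᶜ else Set.univ) with hU
  have hUopen : IsOpen U := by
    apply IsOpen.inter
    · apply IsOpen.inter
      · exact isOpen_compl_singleton.preimage (EuclideanSpace.proj (Sum.inl im)).continuous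
      · exact isOpen_compl_singleton.preimage (EuclideanSpace.proj (Sum.inr jn)).continuous
    · split_ifs
      · exact (isClosed_ZSet _ _ _ _).isOpen_compl
      · exact isOpen_univ
  have hxU : pairToE m n (ph, qh) ∈ U := by
    refine ⟨⟨?_, ?_⟩, ?_⟩
    · show ph.coeff m ≠ 0
      exact Polynomial.coeff_ne_zero_of_eq_degree hphd
    · show qh.coeff n ≠ 0
      exact Polynomial.coeff_ne_zero_of_eq_degree hqhd
    · split_ifs with hcase
      · intro hz
        obtain ⟨w, v, hwv, hw, hv, heq⟩ := kernel_of_mem_ZSet _ hz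
        rw [EtoPair_pairToE m n ph qh (le_of_eq hphd) (le_of_eq hqhd)] at heq
        have := gcdDeg_ge_of_kernel (j := k+1) hphn hqhn hph0 hqh0
          (by omega) hwv (Polynomial.natDegree_le_iff_degree_le.mpr hw)
          (Polynomial.natDegree_le_iff_degree_le.mpr hv) heq
        omega
      · trivial
  -- the image of Pmnk is contained in the closed set ZSet _ _ (n-k) (m-k)
  have hAZ : pairToE m n '' Pmnk m n k ⊆ ZSet m n (n-k) (m-k) := by
    rintro _ ⟨⟨r, s⟩, ⟨⟨hrd, hsd⟩, hg⟩, rfl⟩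
    simp only at hrd hsd hg
    have hr0 : r ≠ 0 := ne_zero_of_degree_coe hrd
    have hs0 : s ≠ 0 := ne_zero_of_degree_coe hsd
    obtain ⟨w, v, hwv, hw, hv, heq⟩ := exists_kernel_of_gcdDeg (j := k)
      (Polynomial.natDegree_eq_of_degree_eq_some hrd)
      (Polynomial.natDegree_eq_of_degree_eq_some hsd) hr0 hs0 (le_of_eq hg.symm)
    apply mem_ZSet_of_kernel _ w v hwv (degree_coe_le_of_natDegree_le hw)
      (degree_coe_le_of_natDegree_le hv)
    rw [EtoPair_pairToE m n r s (le_of_eq hrd) (le_of_eq hsd)]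
    exact heq
  have hclosA : closure (pairToE m n '' Pmnk m n k) ⊆ ZSet m n (n-k) (m-k) :=
    closure_minimal hAZ (isClosed_ZSet _ _ _ _)
  obtain ⟨ε, hε, hball⟩ := Metric.isOpen_iff.mp hUopen _ hxU
  refine ⟨ε, hε, ?_⟩
  intro z hzcl hzball
  have hzU : z ∈ U := hball hzball
  obtain ⟨⟨hz1, hz2⟩, hz3⟩ := hzU
  set r := (EtoPair m n z).1 with hrdef
  set s := (EtoPair m n z).2 with hsdef
  have hrc : r.coeff m = z (Sum.inl im) := by
    rw [hrdef, EtoPair]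
    simp [coeff_ofE, Nat.lt_succ_self m]
    rfl
  have hsc : s.coeff n = z (Sum.inr jn) := by
    rw [hsdef, EtoPair]
    simp [coeff_ofE, Nat.lt_succ_self n]
    rfl
  have hrd : r.degree = (m : WithBot ℕ) :=
    Polynomial.degree_eq_of_le_of_coeff_ne_zero (degree_ofE_le _ _) (hrc ▸ hz1)
  have hsd : s.degree = (n : WithBot ℕ) :=
    Polynomial.degree_eq_of_le_of_coeff_ne_zero (degree_ofE_le _ _) (hsc ▸ hz2)
  have hr0 : r ≠ 0 := ne_zero_of_degree_coe hrd
  have hs0 : s ≠ 0 := ne_zero_of_degree_coe hsd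
  have hrn : r.natDegree = m := Polynomial.natDegree_eq_of_degree_eq_some hrd
  have hsn : s.natDegree = n := Polynomial.natDegree_eq_of_degree_eq_some hsd
  -- gcd degree at least k
  have hge : k ≤ gcdDeg r s := by
    obtain ⟨w, v, hwv, hw, hv, heq⟩ := kernel_of_mem_ZSet _ (hclosA hzcl)
    exact gcdDeg_ge_of_kernel hrn hsn hr0 hs0 (by omega) hwv
      (Polynomial.natDegree_le_iff_degree_le.mpr hw)
      (Polynomial.natDegree_le_iff_degree_le.mpr hv) heq
  -- gcd degree at most k
  have hle : gcdDeg r s ≤ k := by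
    rcases lt_or_eq_of_le hk with hcase | hcase
    · rw [if_pos hcase] at hz3
      by_contra hmore
      apply hz3
      obtain ⟨w, v, hwv, hw, hv, heq⟩ := exists_kernel_of_gcdDeg (j := k+1)
        hrn hsn hr0 hs0 (by omega)
      exact mem_ZSet_of_kernel _ w v hwv (degree_coe_le_of_natDegree_le hw)
        (degree_coe_le_of_natDegree_le hv) heq
    · rw [hcase]
      exact le_min (hrn ▸ gcdDeg_le_left hr0) (hsn ▸ gcdDeg_le_right hs0)
  refine ⟨(r, s), ⟨⟨hrd, hsd⟩, le_antisymm hle hge⟩, ?_⟩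
  rw [show ((r, s) : ℂ[X] × ℂ[X]) = EtoPair m n z from rfl]
  exact pairToE_EtoPair m n z


/-- Near (p̂,q̂) ∈ 𝒫ᵏ_{m,n}, the distance θ_k(p,q) is attained at a pair in
𝒫ᵏ_{m,n}, and any minimizer is within 2‖(p−p̂,q−q̂)‖ of (p̂,q̂). -/
theorem theta_attained (m n k : ℕ) (hm : 1 ≤ m) (hn : 1 ≤ n) (hk : k ≤ min m n)
    (ph qh : ℂ[X]) (hmem : (ph, qh) ∈ Pmnk m n k) :
    ∃ θ : ℝ, 0 < θ ∧ ∀ p q : ℂ[X], (p, q) ∈ Cmn m n →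
      pairNorm (p - ph) (q - qh) < θ →
      (∃ pt qt : ℂ[X], (pt, qt) ∈ Pmnk m n k ∧
        pairNorm (p - pt) (q - qt) = theta m n k p q) ∧
      (∀ pt qt : ℂ[X], (pt, qt) ∈ Pmnk m n k →
        pairNorm (p - pt) (q - qt) = theta m n k p q →
        pairNorm (pt - ph) (qt - qh) ≤ 2 * pairNorm (p - ph) (q - qh)) := by
  obtain ⟨ε, hε, hloc⟩ := local_graph m n k hk ph qh hmem
  set A : Set (E2 m n) := pairToE m n '' Pmnk m n k with hA
  set xh : E2 m n := pairToE m n (ph, qh) with hxh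
  refine ⟨ε/2, by positivity, ?_⟩
  intro p q hpq hclose
  obtain ⟨hpd, hqd⟩ := hpq
  simp only at hpd hqd
  set x : E2 m n := pairToE m n (p, q) with hx
  -- distance formula
  have distPN : ∀ r s : ℂ[X], r.degree = (m : WithBot ℕ) → s.degree = (n : WithBot ℕ) →
      dist x (pairToE m n (r, s)) = pairNorm (p - r) (q - s) := by
    intro r s hrd hsd
    rw [dist_eq_norm, hx, pairToE_sub]
    apply norm_pairToE
    · exact le_trans (Polynomial.degree_sub_le p r) (by rw [hpd, hrd, max_self])
    · exact le_trans (Polynomial.degree_sub_le q s) (by rw [hqd, hsd, max_self])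
  have hdxxh : dist x xh = pairNorm (p - ph) (q - qh) :=
    distPN ph qh hmem.1.1 hmem.1.2
  have hdxxh2 : dist x xh < ε/2 := by rw [hdxxh]; exact hclose
  -- the set of distances
  set S : Set ℝ := (fun rs => pairNorm (p - rs.1) (q - rs.2)) '' Pmnk m n k with hS
  have hSmem : ∀ r s : ℂ[X], (r, s) ∈ Pmnk m n k →
      dist x (pairToE m n (r, s)) ∈ S := by
    intro r s hrs
    exact ⟨(r, s), hrs, (distPN r s hrs.1.1 hrs.1.2).symm⟩
  have hSne : S.Nonempty := ⟨_, (ph, qh), hmem, rfl⟩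
  have hSbdd : BddBelow S := by
    refine ⟨0, ?_⟩
    rintro b ⟨rs, -, rfl⟩
    exact Real.sqrt_nonneg _
  have hthetaS : theta m n k p q = sInf S := rfl
  -- compact minimization
  set K : Set (E2 m n) := closure A ∩ Metric.closedBall x (ε/2) with hK
  have hKcomp : IsCompact K := (isCompact_closedBall x (ε/2)).inter_left isClosed_closure
  have hxhA : xh ∈ A := ⟨(ph, qh), hmem, rfl⟩
  have hxhK : xh ∈ K :=
    ⟨subset_closure hxhA, Metric.mem_closedBall.mpr (by rw [dist_comm]; exact le_of_lt hdxxh2)⟩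
  obtain ⟨y, hyK, hyd⟩ := hKcomp.exists_infDist_eq_dist ⟨xh, hxhK⟩ x
  have hdxy_le : dist x y ≤ dist x xh := hyd ▸ Metric.infDist_le_dist_of_mem hxhK
  -- dist x y is a lower bound for S
  have hlb : ∀ b ∈ S, dist x y ≤ b := by
    rintro b ⟨⟨r, s⟩, hrs, rfl⟩
    show dist x y ≤ pairNorm (p - r) (q - s)
    rw [← distPN r s hrs.1.1 hrs.1.2]
    rcases le_or_gt (dist x (pairToE m n (r, s))) (ε/2) with hle | hlt
    · have hmemK : pairToE m n (r, s) ∈ K :=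
        ⟨subset_closure ⟨(r, s), hrs, rfl⟩,
          Metric.mem_closedBall.mpr (by rw [dist_comm]; exact hle)⟩
      exact hyd ▸ Metric.infDist_le_dist_of_mem hmemK
    · exact le_of_lt (lt_of_le_of_lt hdxy_le (hdxxh2.trans hlt))
  -- sInf S = dist x y
  have hsInf : sInf S = dist x y := by
    apply le_antisymm
    · apply le_of_forall_pos_le_add
      intro δ hδ
      obtain ⟨a, haA, hya⟩ := Metric.mem_closure_iff.mp hyK.1 δ hδ
      obtain ⟨⟨r, s⟩, hrs, rfl⟩ := haA
      calc sInf S ≤ dist x (pairToE m n (r, s)) := csInf_le hSbdd (hSmem r s hrs)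
        _ ≤ dist x y + dist y (pairToE m n (r, s)) := dist_triangle _ _ _
        _ ≤ dist x y + δ := by linarith
    · exact le_csInf hSne hlb
  -- y lies in A
  have hyA : y ∈ A := by
    apply hloc y hyK.1
    rw [Metric.mem_ball]
    calc dist y xh ≤ dist y x + dist x xh := dist_triangle _ _ _
      _ ≤ ε/2 + dist x xh := by
          have := Metric.mem_closedBall.mp hyK.2
          linarith
      _ < ε/2 + ε/2 := by linarith
      _ = ε := by ring
  obtain ⟨⟨pt0, qt0⟩, hPt0, hyE⟩ := hyA
  have hth_le : theta m n k p q ≤ pairNorm (p - ph) (q - qh) := by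
    rw [hthetaS]
    exact csInf_le hSbdd ⟨(ph, qh), hmem, rfl⟩
  constructor
  · refine ⟨pt0, qt0, hPt0, ?_⟩
    rw [← distPN pt0 qt0 hPt0.1.1 hPt0.1.2, hyE, hthetaS, hsInf]
  · intro pt qt hPt hmin
    have h1 : pairNorm (pt - ph) (qt - qh) = dist (pairToE m n (pt, qt)) xh := by
      rw [dist_eq_norm, hxh, pairToE_sub]
      symm
      apply norm_pairToE
      · exact le_trans (Polynomial.degree_sub_le pt ph) (by rw [hPt.1.1, hmem.1.1, max_self])
      · exact le_trans (Polynomial.degree_sub_le qt qh) (by rw [hPt.1.2, hmem.1.2, max_self])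
    have h2 : dist (pairToE m n (pt, qt)) xh ≤
        dist (pairToE m n (pt, qt)) x + dist x xh := dist_triangle _ _ _
    have h3 : dist (pairToE m n (pt, qt)) x = pairNorm (p - pt) (q - qt) := by
      rw [dist_comm]
      exact distPN pt qt hPt.1.1 hPt.1.2
    rw [h1]
    calc dist (pairToE m n (pt, qt)) xh
        ≤ dist (pairToE m n (pt, qt)) x + dist x xh := h2
      _ = pairNorm (p - pt) (q - qt) + pairNorm (p - ph) (q - qh) := by rw [h3, hdxxh]
      _ = theta m n k p q + pairNorm (p - ph) (q - qh) := by rw [hmin]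
      _ ≤ pairNorm (p - ph) (q - qh) + pairNorm (p - ph) (q - qh) := by linarith
      _ = 2 * pairNorm (p - ph) (q - qh) := by ring
end
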